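/- arXiv:2104.01700 — 4 statements merged into one kernel-verified Lean document; each statement's English description precedes it below -/
import Mathlib

section
/- Let ν > 0 be real and not an integer, put k_ν = ⌊ν/2 − 1/2⌋ and μ̃ = ν − 2k_ν − 2, and let B(μ̃,ν) = 2^{1−μ̃} Γ(ν/2 − μ̃/2 + 1/2) / (π Γ(ν/2 + μ̃/2 + 1/2)). Then for every z in the cut plane ℂ ∖ (−∞,0] and for j = 1, 2: 𝐊^{(j)}_ν(z) = B(μ̃,ν) S^{(j)}_{μ̃,ν}(z) + p_ν(z), where 𝐊^{(1)}_ν(z) = 𝐇_ν(z) − i J_ν(z) and 𝐊^{(2)}_ν(z) = 𝐇_ν(z) + i J_ν(z). -/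
/-- Bessel function of the first kind,
`J_ν(z) = Σ_{k=0}^∞ (-1)^k (z/2)^(ν+2k) / (k! Γ(ν+k+1))` (principal powers). -/
noncomputable def besselJ (ν z : ℂ) : ℂ :=
  ∑' k : ℕ, (-1 : ℂ) ^ k * (z / 2) ^ (ν + 2 * (k : ℂ)) /
    ((k.factorial : ℂ) * Complex.Gamma (ν + (k : ℂ) + 1))

/-- Bessel function of the second kind (noninteger order),
`Y_ν(z) = (J_ν(z) cos(νπ) - J_{-ν}(z)) / sin(νπ)`. -/
noncomputable def besselY (ν z : ℂ) : ℂ :=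
  (besselJ ν z * Complex.cos (ν * (Real.pi : ℂ)) - besselJ (-ν) z) /
    Complex.sin (ν * (Real.pi : ℂ))

/-- `a_k(μ,ν) = Π_{m=1}^{k} ((μ+2m-1)² - ν²)`. -/
noncomputable def lommelCoeff (μ ν : ℂ) (k : ℕ) : ℂ :=
  ∏ m ∈ Finset.range k, ((μ + 2 * ((m : ℂ) + 1) - 1) ^ 2 - ν ^ 2)

/-- The Lommel function `s_{μ,ν}(z) = z^(μ+1) Σ_{k=0}^∞ (-1)^k z^(2k) / a_{k+1}(μ,ν)`. -/
noncomputable def lommels (μ ν z : ℂ) : ℂ :=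
  z ^ (μ + 1) * ∑' k : ℕ, (-1 : ℂ) ^ k * z ^ (2 * k) / lommelCoeff μ ν (k + 1)

/-- `A(μ,ν) = 2^(μ-1) Γ(μ/2+ν/2+1/2) Γ(μ/2-ν/2+1/2)`. -/
noncomputable def lommelA (μ ν : ℂ) : ℂ :=
  (2 : ℂ) ^ (μ - 1) * Complex.Gamma (μ / 2 + ν / 2 + 1 / 2) *
    Complex.Gamma (μ / 2 - ν / 2 + 1 / 2)

/-- The Lommel function
`S_{μ,ν}(z) = s_{μ,ν}(z) + A(μ,ν){sin((μ-ν)π/2) J_ν(z) - cos((μ-ν)π/2) Y_ν(z)}`. -/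
noncomputable def lommelS (μ ν z : ℂ) : ℂ :=
  lommels μ ν z + lommelA μ ν *
    (Complex.sin ((μ - ν) * (Real.pi : ℂ) / 2) * besselJ ν z -
      Complex.cos ((μ - ν) * (Real.pi : ℂ) / 2) * besselY ν z)

/-- `S^(0)_{μ,ν}(z) = s_{μ,ν}(z) + A(μ,ν) sin((μ-ν)π/2) J_ν(z)`. -/
noncomputable def lommelS0 (μ ν z : ℂ) : ℂ :=
  lommels μ ν z + lommelA μ ν * Complex.sin ((μ - ν) * (Real.pi : ℂ) / 2) * besselJ ν z

/-- `S^(1)_{μ,ν}(z) = s_{μ,ν}(z) - i e^((μ-ν)πi/2) A(μ,ν) J_ν(z)`. -/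
noncomputable def lommelS1 (μ ν z : ℂ) : ℂ :=
  lommels μ ν z - Complex.I * Complex.exp ((μ - ν) * (Real.pi : ℂ) * Complex.I / 2) *
    lommelA μ ν * besselJ ν z

/-- `S^(2)_{μ,ν}(z) = s_{μ,ν}(z) + i e^((ν-μ)πi/2) A(μ,ν) J_ν(z)`. -/
noncomputable def lommelS2 (μ ν z : ℂ) : ℂ :=
  lommels μ ν z + Complex.I * Complex.exp ((ν - μ) * (Real.pi : ℂ) * Complex.I / 2) *
    lommelA μ ν * besselJ ν z

/-- The Struve function
`𝐇_ν(z) = (z/2)^(ν+1) Σ_{k=0}^∞ (-1)^k (z/2)^(2k)/(Γ(k+3/2) Γ(k+ν+3/2))`. -/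
noncomputable def struveH (ν z : ℂ) : ℂ :=
  (z / 2) ^ (ν + 1) * ∑' k : ℕ, (-1 : ℂ) ^ k * (z / 2) ^ (2 * k) /
    (Complex.Gamma ((k : ℂ) + 3 / 2) * Complex.Gamma ((k : ℂ) + ν + 3 / 2))

/-- `k_ν = ⌊ν/2 - 1/2⌋`. -/
noncomputable def kIdx (ν : ℝ) : ℤ := ⌊ν / 2 - 1 / 2⌋

/-- `μ̃ = ν - 2 k_ν - 2`, so `-1 ≤ μ̃ < 1`. -/
noncomputable def muTilde (ν : ℝ) : ℝ := ν - 2 * (kIdx ν : ℝ) - 2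

/-- `p_ν(z) = (1/π) Σ_{k=0}^{k_ν} Γ(k+1/2) (z/2)^(ν-2k-1) / Γ(ν+1/2-k)` (empty sum is `0`). -/
noncomputable def pStruve (ν : ℝ) (z : ℂ) : ℂ :=
  (1 / (Real.pi : ℂ)) * ∑ k ∈ Finset.range (kIdx ν + 1).toNat,
    Complex.Gamma ((k : ℂ) + 1 / 2) * (z / 2) ^ ((ν : ℂ) - 2 * (k : ℂ) - 1) /
      Complex.Gamma ((ν : ℂ) + 1 / 2 - (k : ℂ))

/-- `B(μ̃,ν) = 2^(1-μ̃) Γ(ν/2-μ̃/2+1/2) / (π Γ(ν/2+μ̃/2+1/2))`. -/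
noncomputable def Bcoef (ν : ℝ) : ℂ :=
  (2 : ℂ) ^ ((1 : ℂ) - (muTilde ν : ℂ)) *
    Complex.Gamma ((ν : ℂ) / 2 - (muTilde ν : ℂ) / 2 + 1 / 2) /
    ((Real.pi : ℂ) * Complex.Gamma ((ν : ℂ) / 2 + (muTilde ν : ℂ) / 2 + 1 / 2))

/-- `𝐊^(1)_ν(z) = 𝐇_ν(z) - i J_ν(z)`. -/
noncomputable def struveK1 (ν z : ℂ) : ℂ := struveH ν z - Complex.I * besselJ ν z

/-- `𝐊^(2)_ν(z) = 𝐇_ν(z) + i J_ν(z)`. -/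
noncomputable def struveK2 (ν z : ℂ) : ℂ := struveH ν z + Complex.I * besselJ ν z

open Complex Finset

noncomputable def Kn (ν : ℝ) : ℕ := (kIdx ν + 1).toNat

lemma Kn_cast {ν : ℝ} (hν : 0 < ν) : ((Kn ν : ℕ) : ℝ) = (kIdx ν : ℝ) + 1 := by
  have h0 : (0:ℤ) ≤ kIdx ν + 1 := by
    have : (-1 : ℤ) ≤ kIdx ν := by
      apply Int.le_floor.mpr
      push_cast
      linarith
    omega
  rw [Kn]
  rw [show (((kIdx ν + 1).toNat : ℕ) : ℝ) = (((kIdx ν + 1).toNat : ℤ) : ℝ) by push_cast; ring,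
    Int.toNat_of_nonneg h0]
  push_cast; ring

lemma muK {ν : ℝ} (hν : 0 < ν) : muTilde ν = ν - 2 * (Kn ν : ℝ) := by
  rw [muTilde, Kn_cast hν]; ring

lemma muKC {ν : ℝ} (hν : 0 < ν) : ((muTilde ν : ℝ) : ℂ) = (ν : ℂ) - 2 * ((Kn ν : ℕ) : ℂ) := by
  rw [muK hν]; push_cast; ring

lemma nuK_pos {ν : ℝ} (hν : 0 < ν) : 0 < ν - (Kn ν : ℝ) + 1/2 := by
  have h1 : (kIdx ν : ℝ) ≤ ν/2 - 1/2 := Int.floor_le _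
  rw [Kn_cast hν]; linarith

lemma half_ne (K n : ℕ) : ((K:ℂ) - (n:ℂ) - 1/2) ≠ 0 := by
  intro h
  rw [show (K:ℂ) - (n:ℂ) - 1/2 = (((K:ℝ) - n - 1/2 : ℝ) : ℂ) by push_cast; ring,
    Complex.ofReal_eq_zero] at h
  have h2 : (2*K : ℝ) = 2*n + 1 := by linarith
  have h3 : (2*K : ℕ) = 2*n + 1 := by exact_mod_cast h2
  omega

lemma Gamma_pos_ne {x : ℝ} (hx : 0 < x) : Complex.Gamma (x:ℂ) ≠ 0 := by
  rw [Complex.Gamma_ofReal]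
  exact_mod_cast (Real.Gamma_pos_of_pos hx).ne'

lemma Gamma_half_shift_ne (K k : ℕ) : Complex.Gamma ((K:ℂ) - (k:ℂ) - 1/2) ≠ 0 := by
  apply Complex.Gamma_ne_zero
  intro m h
  rw [show (K:ℂ) - (k:ℂ) - 1/2 = (((K:ℝ) - k - 1/2 : ℝ) : ℂ) by push_cast; ring,
    show -(m:ℂ) = ((-(m:ℝ) : ℝ) : ℂ) by push_cast; ring, Complex.ofReal_inj] at h
  have h2 : (2*K : ℝ) + 2*m = 2*k + 1 := by linarith
  have h3 : (2*K : ℕ) + 2*m = 2*k + 1 := by exact_mod_cast h2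
  omega

lemma lommelCoeff_succ {ν : ℝ} (hν : 0 < ν) (k : ℕ) :
    lommelCoeff ((muTilde ν : ℝ) : ℂ) (ν : ℂ) (k+1) =
      lommelCoeff ((muTilde ν : ℝ) : ℂ) (ν : ℂ) k *
        (4 * ((k:ℂ) + 1/2 - ((Kn ν : ℕ) : ℂ)) * ((ν:ℂ) + (k:ℂ) + 1/2 - ((Kn ν : ℕ) : ℂ))) := by
  simp only [lommelCoeff, Finset.prod_range_succ]
  congr 1
  rw [muKC hν]; push_cast; ring

lemma lommelCoeff_ne {ν : ℝ} (hν : 0 < ν) (k : ℕ) :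
    lommelCoeff ((muTilde ν : ℝ) : ℂ) (ν : ℂ) k ≠ 0 := by
  induction k with
  | zero => simp [lommelCoeff]
  | succ n ih =>
      rw [lommelCoeff_succ hν n]
      refine mul_ne_zero ih (mul_ne_zero (mul_ne_zero (by norm_num) ?_) ?_)
      · rw [show (n:ℂ) + 1/2 - ((Kn ν : ℕ):ℂ) = -(((Kn ν : ℕ):ℂ) - (n:ℂ) - 1/2) by ring]
        intro h
        exact half_ne (Kn ν) n (by linear_combination -h)
      · rw [show (ν:ℂ) + (n:ℂ) + 1/2 - ((Kn ν:ℕ):ℂ) = ((ν + n + 1/2 - Kn ν : ℝ):ℂ) by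
          push_cast; ring]
        rw [Complex.ofReal_ne_zero]
        have h1 := nuK_pos hν
        have h2 : (0:ℝ) ≤ (n:ℝ) := Nat.cast_nonneg n
        intro h; linarith [h.ge, h.le]

lemma gbase {ν : ℝ} (hν : 0 < ν) :
    ∀ n : ℕ, n ≤ Kn ν →
      Complex.Gamma (((Kn ν : ℕ):ℂ) + 1/2) * (-1)^n * 4^n *
        Complex.Gamma ((ν:ℂ) - ((Kn ν : ℕ):ℂ) + (n:ℂ) + 1/2) =
      Complex.Gamma (((Kn ν : ℕ):ℂ) - (n:ℂ) + 1/2) * Complex.Gamma ((ν:ℂ) - ((Kn ν : ℕ):ℂ) + 1/2) *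
        lommelCoeff ((muTilde ν : ℝ) : ℂ) (ν : ℂ) n := by
  intro n hn
  induction n with
  | zero => simp [lommelCoeff]
  | succ n ih =>
      have IH := ih (by omega)
      have hne1 : (ν:ℂ) - ((Kn ν : ℕ):ℂ) + (n:ℂ) + 1/2 ≠ 0 := by
        rw [show (ν:ℂ) - ((Kn ν : ℕ):ℂ) + (n:ℂ) + 1/2 = ((ν - Kn ν + n + 1/2 : ℝ):ℂ) by
          push_cast; ring, Complex.ofReal_ne_zero]
        have h1 := nuK_pos hν
        have h2 : (0:ℝ) ≤ (n:ℝ) := Nat.cast_nonneg n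
        intro h; linarith [h.ge, h.le]
      have e1 : Complex.Gamma ((ν:ℂ) - ((Kn ν : ℕ):ℂ) + ((n+1 : ℕ):ℂ) + 1/2) =
          ((ν:ℂ) - ((Kn ν : ℕ):ℂ) + (n:ℂ) + 1/2) *
            Complex.Gamma ((ν:ℂ) - ((Kn ν : ℕ):ℂ) + (n:ℂ) + 1/2) := by
        rw [show (ν:ℂ) - ((Kn ν : ℕ):ℂ) + ((n+1 : ℕ):ℂ) + 1/2
            = ((ν:ℂ) - ((Kn ν : ℕ):ℂ) + (n:ℂ) + 1/2) + 1 by push_cast; ring,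
          Complex.Gamma_add_one _ hne1]
      have hne2 : ((Kn ν : ℕ):ℂ) - ((n+1 : ℕ):ℂ) + 1/2 ≠ 0 := by
        rw [show ((Kn ν : ℕ):ℂ) - ((n+1 : ℕ):ℂ) + 1/2 = ((Kn ν : ℕ):ℂ) - (n:ℂ) - 1/2 by
          push_cast; ring]
        exact half_ne _ _
      have e2 : Complex.Gamma (((Kn ν : ℕ):ℂ) - (n:ℂ) + 1/2) =
          (((Kn ν : ℕ):ℂ) - ((n+1 : ℕ):ℂ) + 1/2) *
            Complex.Gamma (((Kn ν : ℕ):ℂ) - ((n+1 : ℕ):ℂ) + 1/2) := by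
        rw [show ((Kn ν : ℕ):ℂ) - (n:ℂ) + 1/2
            = (((Kn ν : ℕ):ℂ) - ((n+1 : ℕ):ℂ) + 1/2) + 1 by push_cast; ring,
          Complex.Gamma_add_one _ hne2]
      rw [e2] at IH
      rw [lommelCoeff_succ hν n, e1]
      push_cast at IH ⊢
      linear_combination (-4 * ((ν:ℂ) - ((Kn ν : ℕ):ℂ) + (n:ℂ) + 1/2)) * IH

lemma Gamma_half_sq : Complex.Gamma (1/2) ^ 2 = (Real.pi : ℂ) := by
  rw [show (1/2 : ℂ) = ((1/2 : ℝ) : ℂ) by norm_num, Complex.Gamma_ofReal]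
  rw [show ((Real.Gamma (1/2) : ℝ) : ℂ) ^ 2 = (((Real.Gamma (1/2))^2 : ℝ) : ℂ) by push_cast; ring]
  rw [Real.Gamma_one_half_eq, Real.sq_sqrt Real.pi_pos.le]

lemma gtail {ν : ℝ} (hν : 0 < ν) :
    ∀ j : ℕ,
      Complex.Gamma (((Kn ν : ℕ):ℂ) + 1/2) * (-1)^(Kn ν) * 4^(Kn ν + j + 1) *
        Complex.Gamma ((j:ℂ) + 3/2) * Complex.Gamma ((j:ℂ) + (ν:ℂ) + 3/2) =
      (Real.pi : ℂ) * Complex.Gamma ((ν:ℂ) - ((Kn ν : ℕ):ℂ) + 1/2) *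
        lommelCoeff ((muTilde ν : ℝ) : ℂ) (ν : ℂ) (Kn ν + j + 1) := by
  intro j
  induction j with
  | zero =>
      have hb := gbase hν (Kn ν) le_rfl
      rw [show (ν:ℂ) - ((Kn ν : ℕ):ℂ) + ((Kn ν : ℕ):ℂ) + 1/2 = (ν:ℂ) + 1/2 by ring,
        show ((Kn ν : ℕ):ℂ) - ((Kn ν : ℕ):ℂ) + 1/2 = (1/2 : ℂ) by ring] at hb
      have h32 : Complex.Gamma (((0:ℕ):ℂ) + 3/2) = (1/2) * Complex.Gamma (1/2) := by
        rw [show ((0:ℕ):ℂ) + 3/2 = (1/2 : ℂ) + 1 by push_cast; ring,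
          Complex.Gamma_add_one _ (by norm_num)]
      have hν2 : (ν:ℂ) + 1/2 ≠ 0 := by
        rw [show (ν:ℂ) + 1/2 = ((ν + 1/2 : ℝ):ℂ) by push_cast; ring, Complex.ofReal_ne_zero]
        positivity
      have hν32 : Complex.Gamma (((0:ℕ):ℂ) + (ν:ℂ) + 3/2) =
          ((ν:ℂ) + 1/2) * Complex.Gamma ((ν:ℂ) + 1/2) := by
        rw [show ((0:ℕ):ℂ) + (ν:ℂ) + 3/2 = ((ν:ℂ) + 1/2) + 1 by push_cast; ring,
          Complex.Gamma_add_one _ hν2]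
      rw [h32, hν32, lommelCoeff_succ hν (Kn ν), ← Gamma_half_sq]
      push_cast
      linear_combination (2 * ((ν:ℂ) + 1/2) * Complex.Gamma (1/2)) * hb
  | succ j ih =>
      have hne1 : (j:ℂ) + 3/2 ≠ 0 := by
        rw [show (j:ℂ) + 3/2 = (((j:ℝ) + 3/2 : ℝ):ℂ) by push_cast; ring, Complex.ofReal_ne_zero]
        positivity
      have hne2 : (j:ℂ) + (ν:ℂ) + 3/2 ≠ 0 := by
        rw [show (j:ℂ) + (ν:ℂ) + 3/2 = (((j:ℝ) + ν + 3/2 : ℝ):ℂ) by push_cast; ring,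
          Complex.ofReal_ne_zero]
        positivity
      have e1 : Complex.Gamma (((j+1:ℕ):ℂ) + 3/2) = ((j:ℂ) + 3/2) * Complex.Gamma ((j:ℂ) + 3/2) := by
        rw [show ((j+1:ℕ):ℂ) + 3/2 = ((j:ℂ) + 3/2) + 1 by push_cast; ring,
          Complex.Gamma_add_one _ hne1]
      have e2 : Complex.Gamma (((j+1:ℕ):ℂ) + (ν:ℂ) + 3/2) =
          ((j:ℂ) + (ν:ℂ) + 3/2) * Complex.Gamma ((j:ℂ) + (ν:ℂ) + 3/2) := by
        rw [show ((j+1:ℕ):ℂ) + (ν:ℂ) + 3/2 = ((j:ℂ) + (ν:ℂ) + 3/2) + 1 by push_cast; ring,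
          Complex.Gamma_add_one _ hne2]
      rw [show Kn ν + (j+1) + 1 = (Kn ν + j + 1) + 1 from rfl, e1, e2,
        lommelCoeff_succ hν (Kn ν + j + 1)]
      push_cast
      linear_combination (4 * ((j:ℂ) + 3/2) * ((j:ℂ) + (ν:ℂ) + 3/2)) * ih

lemma two_mul_cpow {w : ℂ} (hw : w ≠ 0) (s : ℂ) :
    (2 * w) ^ s = (2 : ℂ) ^ s * w ^ s := by
  have h0 : (2 : ℂ) * w ≠ 0 := mul_ne_zero two_ne_zero hw
  have hlog : Complex.log (2 * w) = Complex.log 2 + Complex.log w := by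
    rw [show (2:ℂ) = ((2:ℝ):ℂ) by norm_num, Complex.log_ofReal_mul (by norm_num) hw,
      Complex.ofReal_log (by norm_num : (0:ℝ) ≤ 2)]
  rw [Complex.cpow_def_of_ne_zero h0, Complex.cpow_def_of_ne_zero two_ne_zero,
    Complex.cpow_def_of_ne_zero hw, hlog, add_mul, Complex.exp_add]

lemma gamma_fact_bound : ∀ j : ℕ, (j.factorial : ℝ) / 2 ≤ Real.Gamma ((j:ℝ) + 3/2) := by
  intro j
  induction j with
  | zero =>
      rw [show ((0:ℕ):ℝ) + 3/2 = 1/2 + 1 by norm_num, Real.Gamma_add_one (by norm_num),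
        Real.Gamma_one_half_eq]
      have h1 : (1:ℝ) ≤ Real.sqrt Real.pi := by
        nlinarith [Real.sq_sqrt Real.pi_pos.le, Real.sqrt_nonneg Real.pi, Real.pi_gt_three]
      simp [Nat.factorial]
      nlinarith [Real.pi_gt_three, h1]
  | succ j ih =>
      have h1 : Real.Gamma (((j+1:ℕ):ℝ) + 3/2) = ((j:ℝ) + 3/2) * Real.Gamma ((j:ℝ) + 3/2) := by
        rw [show ((j+1:ℕ):ℝ) + 3/2 = ((j:ℝ) + 3/2) + 1 by push_cast; ring,
          Real.Gamma_add_one (by positivity)]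
      rw [h1]
      have h2 : (0:ℝ) < Real.Gamma ((j:ℝ) + 3/2) := Real.Gamma_pos_of_pos (by positivity)
      have h3 : ((j+1).factorial : ℝ) = ((j:ℝ) + 1) * j.factorial := by
        rw [Nat.factorial_succ]; push_cast; ring
      rw [h3]
      nlinarith [Nat.cast_nonneg (α := ℝ) j.factorial]

lemma gamma_mono_bound {ν : ℝ} (hν : 0 < ν) :
    ∀ j : ℕ, Real.Gamma (ν + 3/2) ≤ Real.Gamma ((j:ℝ) + ν + 3/2) := by
  intro j
  induction j with
  | zero => simp
  | succ j ih =>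
      have h1 : Real.Gamma (((j+1:ℕ):ℝ) + ν + 3/2) = ((j:ℝ) + ν + 3/2) * Real.Gamma ((j:ℝ) + ν + 3/2) := by
        rw [show ((j+1:ℕ):ℝ) + ν + 3/2 = ((j:ℝ) + ν + 3/2) + 1 by push_cast; ring,
          Real.Gamma_add_one (by positivity)]
      rw [h1]
      have h2 : (0:ℝ) < Real.Gamma ((j:ℝ) + ν + 3/2) := Real.Gamma_pos_of_pos (by positivity)
      nlinarith

lemma neg_one_pow_inv (K : ℕ) : ((-1:ℂ)^K)⁻¹ = (-1:ℂ)^K := by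
  rw [← inv_pow, inv_neg, inv_one]

lemma Gamma_nuK_ne {ν : ℝ} (hν : 0 < ν) :
    Complex.Gamma ((ν:ℂ) - ((Kn ν : ℕ):ℂ) + 1/2) ≠ 0 := by
  rw [show (ν:ℂ) - ((Kn ν : ℕ):ℂ) + 1/2 = ((ν - Kn ν + 1/2 : ℝ):ℂ) by push_cast; ring]
  exact Gamma_pos_ne (nuK_pos hν)

lemma coefBA {ν : ℝ} (hν : 0 < ν) :
    Bcoef ν * lommelA ((muTilde ν : ℝ) : ℂ) (ν : ℂ) = (-1:ℂ)^(Kn ν) := by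
  rw [Bcoef, lommelA,
    show (ν:ℂ)/2 - ((muTilde ν : ℝ):ℂ)/2 + 1/2 = ((Kn ν : ℕ):ℂ) + 1/2 by rw [muKC hν]; ring,
    show (ν:ℂ)/2 + ((muTilde ν : ℝ):ℂ)/2 + 1/2 = (ν:ℂ) - ((Kn ν : ℕ):ℂ) + 1/2 by
      rw [muKC hν]; ring,
    show ((muTilde ν : ℝ):ℂ)/2 + (ν:ℂ)/2 + 1/2 = (ν:ℂ) - ((Kn ν : ℕ):ℂ) + 1/2 by
      rw [muKC hν]; ring,
    show ((muTilde ν : ℝ):ℂ)/2 - (ν:ℂ)/2 + 1/2 = 1 - (((Kn ν : ℕ):ℂ) + 1/2) by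
      rw [muKC hν]; ring]
  have h2 : (2:ℂ)^((1:ℂ) - ((muTilde ν : ℝ):ℂ)) * (2:ℂ)^(((muTilde ν : ℝ):ℂ) - 1) = 1 := by
    rw [← Complex.cpow_add _ _ two_ne_zero,
      show (1:ℂ) - ((muTilde ν : ℝ):ℂ) + (((muTilde ν : ℝ):ℂ) - 1) = 0 by ring,
      Complex.cpow_zero]
  have hsin : Complex.sin ((Real.pi:ℂ) * (((Kn ν : ℕ):ℂ) + 1/2)) = (-1:ℂ)^(Kn ν) := by
    rw [show (Real.pi:ℂ) * (((Kn ν : ℕ):ℂ) + 1/2)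
        = ((Real.pi * ((Kn ν : ℕ) + 1/2) : ℝ):ℂ) by push_cast; ring,
      ← Complex.ofReal_sin,
      show Real.pi * (((Kn ν : ℕ):ℝ) + 1/2) = Real.pi/2 + (Kn ν : ℕ) * Real.pi by ring,
      Real.sin_add_nat_mul_pi, Real.sin_pi_div_two, mul_one]
    push_cast; ring
  have hrefl := Complex.Gamma_mul_Gamma_one_sub (((Kn ν : ℕ):ℂ) + 1/2)
  rw [hsin] at hrefl
  have hΓ' := Gamma_nuK_ne hν
  have hπ : (Real.pi : ℂ) ≠ 0 := by
    simpa using Real.pi_ne_zero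
  have hm1 : (-1:ℂ)^(Kn ν) ≠ 0 := by
    apply pow_ne_zero; norm_num
  have hKK : (-1:ℂ)^(Kn ν) * (-1:ℂ)^(Kn ν) = 1 := by
    rw [← pow_add, ← two_mul, pow_mul]; norm_num
  have expand : (2:ℂ)^((1:ℂ) - ((muTilde ν : ℝ):ℂ)) * Complex.Gamma (((Kn ν : ℕ):ℂ) + 1/2) /
        ((Real.pi:ℂ) * Complex.Gamma ((ν:ℂ) - ((Kn ν : ℕ):ℂ) + 1/2)) *
        ((2:ℂ)^(((muTilde ν : ℝ):ℂ) - 1) * Complex.Gamma ((ν:ℂ) - ((Kn ν : ℕ):ℂ) + 1/2) *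
          Complex.Gamma (1 - (((Kn ν : ℕ):ℂ) + 1/2)))
      = ((2:ℂ)^((1:ℂ) - ((muTilde ν : ℝ):ℂ)) * (2:ℂ)^(((muTilde ν : ℝ):ℂ) - 1)) *
          (Complex.Gamma (((Kn ν : ℕ):ℂ) + 1/2) * Complex.Gamma (1 - (((Kn ν : ℕ):ℂ) + 1/2))) *
          (Complex.Gamma ((ν:ℂ) - ((Kn ν : ℕ):ℂ) + 1/2) /
            Complex.Gamma ((ν:ℂ) - ((Kn ν : ℕ):ℂ) + 1/2)) / (Real.pi:ℂ) := by
    ring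
  rw [expand, h2, div_self hΓ', hrefl, one_mul, mul_one]
  field_simp
  linear_combination -hKK

lemma coefExp1 {ν : ℝ} (hν : 0 < ν) :
    Complex.exp ((((muTilde ν : ℝ):ℂ) - (ν:ℂ)) * (Real.pi:ℂ) * Complex.I / 2) =
      (-1:ℂ)^(Kn ν) := by
  rw [show (((muTilde ν : ℝ):ℂ) - (ν:ℂ)) * (Real.pi:ℂ) * Complex.I / 2
      = ((-(Kn ν : ℕ) : ℤ):ℂ) * ((Real.pi:ℂ) * Complex.I) by rw [muKC hν]; push_cast; ring,
    Complex.exp_int_mul, Complex.exp_pi_mul_I, zpow_neg, zpow_natCast, neg_one_pow_inv]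

lemma coefExp2 {ν : ℝ} (hν : 0 < ν) :
    Complex.exp (((ν:ℂ) - ((muTilde ν : ℝ):ℂ)) * (Real.pi:ℂ) * Complex.I / 2) =
      (-1:ℂ)^(Kn ν) := by
  rw [show ((ν:ℂ) - ((muTilde ν : ℝ):ℂ)) * (Real.pi:ℂ) * Complex.I / 2
      = ((Kn ν : ℕ):ℂ) * ((Real.pi:ℂ) * Complex.I) by rw [muKC hν]; push_cast; ring,
    Complex.exp_nat_mul, Complex.exp_pi_mul_I]

lemma hB4 {ν : ℝ} (hν : 0 < ν) :
    Bcoef ν * (2:ℂ)^(((muTilde ν : ℝ):ℂ) + 1)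
      = 4 * Complex.Gamma (((Kn ν : ℕ):ℂ) + 1/2) /
          ((Real.pi:ℂ) * Complex.Gamma ((ν:ℂ) - ((Kn ν : ℕ):ℂ) + 1/2)) := by
  rw [Bcoef,
    show (ν:ℂ)/2 - ((muTilde ν:ℝ):ℂ)/2 + 1/2 = ((Kn ν : ℕ):ℂ) + 1/2 by rw [muKC hν]; ring,
    show (ν:ℂ)/2 + ((muTilde ν:ℝ):ℂ)/2 + 1/2 = (ν:ℂ) - ((Kn ν : ℕ):ℂ) + 1/2 by
      rw [muKC hν]; ring]
  have h2 : (2:ℂ)^((1:ℂ) - ((muTilde ν:ℝ):ℂ)) * (2:ℂ)^(((muTilde ν:ℝ):ℂ) + 1) = 4 := by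
    rw [← Complex.cpow_add _ _ two_ne_zero,
      show (1:ℂ) - ((muTilde ν:ℝ):ℂ) + (((muTilde ν:ℝ):ℂ) + 1) = ((2:ℕ):ℂ) by push_cast; ring,
      Complex.cpow_natCast]
    norm_num
  have hπ : (Real.pi : ℂ) ≠ 0 := by simpa using Real.pi_ne_zero
  have hΓ' := Gamma_nuK_ne hν
  set G1 := Complex.Gamma (((Kn ν : ℕ):ℂ) + 1/2) with hG1
  set G2 := Complex.Gamma ((ν:ℂ) - ((Kn ν : ℕ):ℂ) + 1/2) with hG2
  field_simp
  linear_combination G1 * h2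

lemma tailterm {ν : ℝ} (hν : 0 < ν) {z : ℂ} (hz0 : z ≠ 0) (j : ℕ) :
    Bcoef ν * z ^ (((muTilde ν:ℝ):ℂ) + 1) *
      ((-1:ℂ)^(j + Kn ν) * z ^ (2 * (j + Kn ν)) /
        lommelCoeff ((muTilde ν:ℝ):ℂ) (ν:ℂ) (j + Kn ν + 1))
    = (z/2) ^ ((ν:ℂ) + 1) *
      ((-1:ℂ)^j * (z/2)^(2*j) /
        (Complex.Gamma ((j:ℂ) + 3/2) * Complex.Gamma ((j:ℂ) + (ν:ℂ) + 3/2))) := by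
  have hw : z / 2 ≠ 0 := div_ne_zero hz0 two_ne_zero
  have hzp : z ^ (((muTilde ν:ℝ):ℂ) + 1) =
      (2:ℂ)^(((muTilde ν:ℝ):ℂ) + 1) * (z/2)^(((muTilde ν:ℝ):ℂ) + 1) := by
    conv_lhs => rw [show z = 2 * (z/2) by ring]
    rw [two_mul_cpow hw]
  have hznat : z ^ (2 * (j + Kn ν)) = (2:ℂ)^(2*(j + Kn ν)) * (z/2)^(2*(j + Kn ν)) := by
    conv_lhs => rw [show z = 2 * (z/2) by ring]
    rw [mul_pow]
  have hsplit : (z/2)^(((muTilde ν:ℝ):ℂ) + 1) * (z/2)^(2*(j + Kn ν))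
      = (z/2)^((ν:ℂ)+1) * (z/2)^(2*j) := by
    rw [← Complex.cpow_natCast (z/2) (2*(j + Kn ν)), ← Complex.cpow_add _ _ hw,
      show ((muTilde ν:ℝ):ℂ) + 1 + ((2*(j + Kn ν) : ℕ):ℂ) = ((ν:ℂ)+1) + ((2*j : ℕ):ℂ) by
        rw [muKC hν]; push_cast; ring,
      Complex.cpow_add _ _ hw, Complex.cpow_natCast]
  have hΓ1 : Complex.Gamma ((j:ℂ)+3/2) ≠ 0 := by
    rw [show (j:ℂ)+3/2 = (((j:ℝ)+3/2 : ℝ):ℂ) by push_cast; ring]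
    exact Gamma_pos_ne (by positivity)
  have hΓ2 : Complex.Gamma ((j:ℂ)+(ν:ℂ)+3/2) ≠ 0 := by
    rw [show (j:ℂ)+(ν:ℂ)+3/2 = (((j:ℝ)+ν+3/2 : ℝ):ℂ) by push_cast; ring]
    exact Gamma_pos_ne (by positivity)
  have hsc : Bcoef ν * (2:ℂ)^(((muTilde ν:ℝ):ℂ)+1) *
        ((2:ℂ)^(2*(j + Kn ν)) * (-1:ℂ)^(j + Kn ν)) /
        lommelCoeff ((muTilde ν:ℝ):ℂ) (ν:ℂ) (j + Kn ν + 1)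
      = (-1:ℂ)^j / (Complex.Gamma ((j:ℂ)+3/2) * Complex.Gamma ((j:ℂ)+(ν:ℂ)+3/2)) := by
    have hg := gtail hν j
    have ha := lommelCoeff_ne hν (Kn ν + j + 1)
    have hπ : (Real.pi : ℂ) ≠ 0 := by simpa using Real.pi_ne_zero
    have hΓ' := Gamma_nuK_ne hν
    rw [show j + Kn ν + 1 = Kn ν + j + 1 by omega,
      show (2:ℂ)^(2*(j + Kn ν)) = 4^(j + Kn ν) by rw [pow_mul]; norm_num,
      hB4 hν]
    set G1 := Complex.Gamma (((Kn ν : ℕ):ℂ) + 1/2) with hG1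
    set G2 := Complex.Gamma ((ν:ℂ) - ((Kn ν : ℕ):ℂ) + 1/2) with hG2
    set G3 := Complex.Gamma ((j:ℂ)+3/2) with hG3
    set G4 := Complex.Gamma ((j:ℂ)+(ν:ℂ)+3/2) with hG4
    set L := lommelCoeff ((muTilde ν:ℝ):ℂ) (ν:ℂ) (Kn ν + j + 1) with hL
    field_simp
    linear_combination ((-1:ℂ)^j) * hg
  rw [hzp, hznat,
    show Bcoef ν * ((2:ℂ)^(((muTilde ν:ℝ):ℂ) + 1) * (z/2)^(((muTilde ν:ℝ):ℂ) + 1)) *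
        ((-1:ℂ)^(j + Kn ν) * ((2:ℂ)^(2*(j + Kn ν)) * (z/2)^(2*(j + Kn ν))) /
          lommelCoeff ((muTilde ν:ℝ):ℂ) (ν:ℂ) (j + Kn ν + 1))
      = (Bcoef ν * (2:ℂ)^(((muTilde ν:ℝ):ℂ)+1) *
          ((2:ℂ)^(2*(j + Kn ν)) * (-1:ℂ)^(j + Kn ν)) /
          lommelCoeff ((muTilde ν:ℝ):ℂ) (ν:ℂ) (j + Kn ν + 1)) *
        ((z/2)^(((muTilde ν:ℝ):ℂ) + 1) * (z/2)^(2*(j + Kn ν))) from by ring,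
    hsc, hsplit]
  ring

lemma headterm {ν : ℝ} (hν : 0 < ν) {z : ℂ} (hz0 : z ≠ 0) {k : ℕ} (hk : k < Kn ν) :
    Bcoef ν * z ^ (((muTilde ν:ℝ):ℂ) + 1) *
      ((-1:ℂ)^k * z ^ (2*k) / lommelCoeff ((muTilde ν:ℝ):ℂ) (ν:ℂ) (k+1))
    = -((1/(Real.pi:ℂ)) * (Complex.Gamma (((Kn ν - 1 - k : ℕ):ℂ) + 1/2) *
        (z/2) ^ ((ν:ℂ) - 2*((Kn ν - 1 - k : ℕ):ℂ) - 1) /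
        Complex.Gamma ((ν:ℂ) + 1/2 - ((Kn ν - 1 - k : ℕ):ℂ)))) := by
  have hw : z / 2 ≠ 0 := div_ne_zero hz0 two_ne_zero
  have hmC : ((Kn ν - 1 - k : ℕ):ℂ) = ((Kn ν : ℕ):ℂ) - (k:ℂ) - 1 := by
    have h' : (Kn ν - 1 - k) + k + 1 = Kn ν := by omega
    have h'' : ((Kn ν - 1 - k : ℕ):ℂ) + (k:ℂ) + 1 = ((Kn ν : ℕ):ℂ) := by
      exact_mod_cast congrArg (Nat.cast : ℕ → ℂ) h'
    linear_combination h''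
  rw [hmC,
    show ((Kn ν : ℕ):ℂ) - (k:ℂ) - 1 + 1/2 = ((Kn ν : ℕ):ℂ) - ((k:ℂ)+1) + 1/2 by ring,
    show (ν:ℂ) + 1/2 - (((Kn ν : ℕ):ℂ) - (k:ℂ) - 1)
      = (ν:ℂ) - ((Kn ν : ℕ):ℂ) + ((k:ℂ)+1) + 1/2 by ring]
  have hb := gbase hν (k+1) (by omega)
  push_cast at hb
  have hzp : z ^ (((muTilde ν:ℝ):ℂ) + 1) =
      (2:ℂ)^(((muTilde ν:ℝ):ℂ) + 1) * (z/2)^(((muTilde ν:ℝ):ℂ) + 1) := by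
    conv_lhs => rw [show z = 2 * (z/2) by ring]
    rw [two_mul_cpow hw]
  have hznat : z ^ (2*k) = (2:ℂ)^(2*k) * (z/2)^(2*k) := by
    conv_lhs => rw [show z = 2 * (z/2) by ring]
    rw [mul_pow]
  have hsplit : (z/2)^(((muTilde ν:ℝ):ℂ) + 1) * (z/2)^(2*k)
      = (z/2)^((ν:ℂ) - 2*(((Kn ν : ℕ):ℂ) - (k:ℂ) - 1) - 1) := by
    rw [← Complex.cpow_natCast (z/2) (2*k), ← Complex.cpow_add _ _ hw,
      show ((muTilde ν:ℝ):ℂ) + 1 + ((2*k : ℕ):ℂ)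
        = (ν:ℂ) - 2*(((Kn ν : ℕ):ℂ) - (k:ℂ) - 1) - 1 by rw [muKC hν]; push_cast; ring]
  have hΓm : Complex.Gamma (((Kn ν : ℕ):ℂ) - ((k:ℂ)+1) + 1/2) ≠ 0 := by
    rw [show ((Kn ν : ℕ):ℂ) - ((k:ℂ)+1) + 1/2 = ((Kn ν : ℕ):ℂ) - (k:ℂ) - 1/2 by ring]
    exact Gamma_half_shift_ne _ _
  have hΓm' : Complex.Gamma ((ν:ℂ) - ((Kn ν : ℕ):ℂ) + ((k:ℂ)+1) + 1/2) ≠ 0 := by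
    rw [show (ν:ℂ) - ((Kn ν : ℕ):ℂ) + ((k:ℂ)+1) + 1/2 = ((ν - Kn ν + (k+1) + 1/2 : ℝ):ℂ) by
      push_cast; ring]
    refine Gamma_pos_ne ?_
    have h1 := nuK_pos hν
    have h2 : (0:ℝ) ≤ (k:ℝ) := Nat.cast_nonneg k
    linarith
  have hπ : (Real.pi : ℂ) ≠ 0 := by simpa using Real.pi_ne_zero
  have hΓ' := Gamma_nuK_ne hν
  have ha := lommelCoeff_ne hν (k+1)
  have hsc : Bcoef ν * (2:ℂ)^(((muTilde ν:ℝ):ℂ)+1) * ((2:ℂ)^(2*k) * (-1:ℂ)^k) /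
        lommelCoeff ((muTilde ν:ℝ):ℂ) (ν:ℂ) (k+1)
      = -((1/(Real.pi:ℂ)) * (Complex.Gamma (((Kn ν : ℕ):ℂ) - ((k:ℂ)+1) + 1/2) /
          Complex.Gamma ((ν:ℂ) - ((Kn ν : ℕ):ℂ) + ((k:ℂ)+1) + 1/2))) := by
    rw [hB4 hν, show (2:ℂ)^(2*k) = 4^k by rw [pow_mul]; norm_num]
    set G1 := Complex.Gamma (((Kn ν : ℕ):ℂ) + 1/2) with hG1
    set G2 := Complex.Gamma ((ν:ℂ) - ((Kn ν : ℕ):ℂ) + 1/2) with hG2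
    set G3 := Complex.Gamma (((Kn ν : ℕ):ℂ) - ((k:ℂ)+1) + 1/2) with hG3
    set G4 := Complex.Gamma ((ν:ℂ) - ((Kn ν : ℕ):ℂ) + ((k:ℂ)+1) + 1/2) with hG4
    set L := lommelCoeff ((muTilde ν:ℝ):ℂ) (ν:ℂ) (k+1) with hL
    field_simp
    linear_combination (-1:ℂ) * hb
  rw [hzp, hznat,
    show Bcoef ν * ((2:ℂ)^(((muTilde ν:ℝ):ℂ) + 1) * (z/2)^(((muTilde ν:ℝ):ℂ) + 1)) *
        ((-1:ℂ)^k * ((2:ℂ)^(2*k) * (z/2)^(2*k)) /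
          lommelCoeff ((muTilde ν:ℝ):ℂ) (ν:ℂ) (k+1))
      = (Bcoef ν * (2:ℂ)^(((muTilde ν:ℝ):ℂ)+1) * ((2:ℂ)^(2*k) * (-1:ℂ)^k) /
          lommelCoeff ((muTilde ν:ℝ):ℂ) (ν:ℂ) (k+1)) *
        ((z/2)^(((muTilde ν:ℝ):ℂ) + 1) * (z/2)^(2*k)) from by ring,
    hsc, hsplit]
  ring

lemma struve_summable {ν : ℝ} (hν : 0 < ν) (z : ℂ) :
    Summable (fun j : ℕ => (-1:ℂ)^j * (z/2)^(2*j) /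
      (Complex.Gamma ((j:ℂ) + 3/2) * Complex.Gamma ((j:ℂ) + (ν:ℂ) + 3/2))) := by
  have hC : (0:ℝ) < Real.Gamma (ν + 3/2) := Real.Gamma_pos_of_pos (by positivity)
  apply Summable.of_norm_bounded
    (g := fun j : ℕ => (2 / Real.Gamma (ν + 3/2)) * ((‖z/2‖^2)^j / j.factorial))
    ((Real.summable_pow_div_factorial _).mul_left _)
  intro j
  have e1 : Complex.Gamma ((j:ℂ)+3/2) = ((Real.Gamma ((j:ℝ)+3/2) : ℝ):ℂ) := by
    rw [show (j:ℂ)+3/2 = (((j:ℝ)+3/2 : ℝ):ℂ) by push_cast; ring, Complex.Gamma_ofReal]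
  have e2 : Complex.Gamma ((j:ℂ)+(ν:ℂ)+3/2) = ((Real.Gamma ((j:ℝ)+ν+3/2) : ℝ):ℂ) := by
    rw [show (j:ℂ)+(ν:ℂ)+3/2 = (((j:ℝ)+ν+3/2 : ℝ):ℂ) by push_cast; ring, Complex.Gamma_ofReal]
  have hA : (0:ℝ) < Real.Gamma ((j:ℝ)+3/2) := Real.Gamma_pos_of_pos (by positivity)
  have hB : (0:ℝ) < Real.Gamma ((j:ℝ)+ν+3/2) := Real.Gamma_pos_of_pos (by positivity)
  rw [norm_div, norm_mul, norm_pow, norm_neg, norm_one, one_pow, one_mul, norm_pow,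
    e1, e2, norm_mul, Complex.norm_real, Complex.norm_real,
    Real.norm_of_nonneg hA.le, Real.norm_of_nonneg hB.le]
  have h1 := gamma_fact_bound j
  have h2 := gamma_mono_bound hν j
  have hfac : (0:ℝ) < (j.factorial : ℝ) := by exact_mod_cast j.factorial_pos
  rw [div_le_iff₀ (by positivity), pow_mul]
  have hle : ((j.factorial : ℝ)/2) * Real.Gamma (ν + 3/2)
      ≤ Real.Gamma ((j:ℝ)+3/2) * Real.Gamma ((j:ℝ)+ν+3/2) :=
    mul_le_mul h1 h2 hC.le hA.le
  have hpow : (0:ℝ) ≤ (‖z/2‖^2)^j := by positivity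
  calc (‖z/2‖^2)^j = (2 / Real.Gamma (ν + 3/2)) * ((‖z/2‖^2)^j / (j.factorial : ℝ)) *
        (((j.factorial : ℝ)/2) * Real.Gamma (ν + 3/2)) := by
        field_simp
    _ ≤ (2 / Real.Gamma (ν + 3/2)) * ((‖z/2‖^2)^j / (j.factorial : ℝ)) *
        (Real.Gamma ((j:ℝ)+3/2) * Real.Gamma ((j:ℝ)+ν+3/2)) := by
        apply mul_le_mul_of_nonneg_left hle
        positivity

lemma key {ν : ℝ} (hν : 0 < ν) {z : ℂ} (hz : z ∈ Complex.slitPlane) :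
    struveH (ν:ℂ) z = Bcoef ν * lommels ((muTilde ν : ℝ):ℂ) (ν:ℂ) z + pStruve ν z := by
  have hz0 : z ≠ 0 := Complex.slitPlane_ne_zero hz
  have hlom : Bcoef ν * lommels ((muTilde ν : ℝ):ℂ) (ν:ℂ) z
      = ∑' k : ℕ, Bcoef ν * z ^ (((muTilde ν:ℝ):ℂ) + 1) *
          ((-1:ℂ)^k * z ^ (2*k) / lommelCoeff ((muTilde ν:ℝ):ℂ) (ν:ℂ) (k+1)) := by
    rw [lommels, ← mul_assoc, ← tsum_mul_left]
  have hS := struve_summable hν z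
  have hFsum : Summable (fun k : ℕ => Bcoef ν * z ^ (((muTilde ν:ℝ):ℂ) + 1) *
      ((-1:ℂ)^k * z ^ (2*k) / lommelCoeff ((muTilde ν:ℝ):ℂ) (ν:ℂ) (k+1))) := by
    rw [← summable_nat_add_iff (Kn ν)]
    exact Summable.congr (hS.mul_left ((z/2) ^ ((ν:ℂ) + 1)))
      (fun j => (tailterm hν hz0 j).symm)
  have hhead : ∑ k ∈ Finset.range (Kn ν), (Bcoef ν * z ^ (((muTilde ν:ℝ):ℂ) + 1) *
      ((-1:ℂ)^k * z ^ (2*k) / lommelCoeff ((muTilde ν:ℝ):ℂ) (ν:ℂ) (k+1)))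
      = - pStruve ν z := by
    rw [pStruve, Finset.mul_sum, show (kIdx ν + 1).toNat = Kn ν from rfl,
      ← Finset.sum_range_reflect (fun k => (1/(Real.pi:ℂ)) *
        (Complex.Gamma ((k:ℂ) + 1/2) * (z/2) ^ ((ν:ℂ) - 2*(k:ℂ) - 1) /
          Complex.Gamma ((ν:ℂ) + 1/2 - (k:ℂ)))) (Kn ν),
      ← Finset.sum_neg_distrib]
    exact Finset.sum_congr rfl fun k hk => headterm hν hz0 (Finset.mem_range.mp hk)
  rw [hlom, ← Summable.sum_add_tsum_nat_add (Kn ν) hFsum, hhead,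
    tsum_congr (fun j => tailterm hν hz0 j), tsum_mul_left, ← struveH]
  ring

/-- For real noninteger `ν > 0`, with `k_ν = ⌊ν/2 - 1/2⌋` and `μ̃ = ν - 2k_ν - 2`:
`𝐊^(j)_ν(z) = B(μ̃,ν) S^(j)_{μ̃,ν}(z) + p_ν(z)` for `j = 1, 2`, on the cut plane. -/
theorem struveK12_eq_lommelS12 (ν : ℝ) (hν : 0 < ν) (hint : ∀ n : ℤ, ν ≠ (n : ℝ)) :
    ∀ z ∈ Complex.slitPlane,
      struveK1 (ν : ℂ) z = Bcoef ν * lommelS1 ((muTilde ν : ℝ) : ℂ) (ν : ℂ) z + pStruve ν z ∧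
      struveK2 (ν : ℂ) z = Bcoef ν * lommelS2 ((muTilde ν : ℝ) : ℂ) (ν : ℂ) z + pStruve ν z := by
  intro z hz
  have hm := key hν hz
  have hBA := coefBA hν
  have hKK : (-1:ℂ)^(Kn ν) * (-1:ℂ)^(Kn ν) = 1 := by
    rw [← pow_add, ← two_mul, pow_mul]; norm_num
  constructor
  · rw [struveK1, lommelS1, coefExp1 hν]
    linear_combination hm + Complex.I * besselJ (ν:ℂ) z * (-1:ℂ)^(Kn ν) * hBA +
      Complex.I * besselJ (ν:ℂ) z * hKK
  · rw [struveK2, lommelS2, coefExp2 hν]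
    linear_combination hm - Complex.I * besselJ (ν:ℂ) z * (-1:ℂ)^(Kn ν) * hBA -
      Complex.I * besselJ (ν:ℂ) z * hKK
end

section
/- Let μ ∈ ℂ and let ν ∈ ℂ be noninteger with (μ+2m−1)² ≠ ν² for every integer m ≥ 1, and suppose none of (μ±ν+1)/2 is a nonpositive integer. Then for every z in the cut plane ℂ ∖ (−∞,0]: S^{(0)}_{μ,−ν}(z) = S^{(0)}_{μ,ν}(z) + sin(πν) A(μ,ν) { cos((μ+ν)π/2) J_ν(z) − sin((μ+ν)π/2) Y_ν(z) }. -/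
/-- Reflection formula: `S^(0)_{μ,-ν}(z) = S^(0)_{μ,ν}(z) +
sin(πν) A(μ,ν) {cos((μ+ν)π/2) J_ν(z) - sin((μ+ν)π/2) Y_ν(z)}`. -/
theorem lommelS0_reflection (μ ν : ℂ) (hint : ∀ n : ℤ, ν ≠ (n : ℂ))
    (ha : ∀ m : ℕ, (μ + 2 * ((m : ℂ) + 1) - 1) ^ 2 ≠ ν ^ 2)
    (hg : ∀ n : ℕ, (μ + ν + 1) / 2 ≠ -(n : ℂ) ∧ (μ - ν + 1) / 2 ≠ -(n : ℂ)) :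
    ∀ z ∈ Complex.slitPlane,
      lommelS0 μ (-ν) z = lommelS0 μ ν z +
        Complex.sin ((Real.pi : ℂ) * ν) * lommelA μ ν *
          (Complex.cos ((μ + ν) * (Real.pi : ℂ) / 2) * besselJ ν z -
            Complex.sin ((μ + ν) * (Real.pi : ℂ) / 2) * besselY ν z) := by
  intro z hz
  have hs : Complex.sin (ν * (Real.pi : ℂ)) ≠ 0 := by
    rw [Complex.sin_ne_zero_iff]
    intro n
    intro h
    exact hint n (by
      have : (n : ℂ) * Real.pi = ν * Real.pi := h.symm
      have hpi : (Real.pi : ℂ) ≠ 0 := by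
        simpa using Complex.ofReal_ne_zero.mpr Real.pi_ne_zero
      field_simp at this
      simpa [eq_comm] using this)
  have hcoeff : ∀ k, lommelCoeff μ (-ν) k = lommelCoeff μ ν k := by
    intro k; unfold lommelCoeff; simp [neg_sq]
  have hls : lommels μ (-ν) z = lommels μ ν z := by
    unfold lommels; rw [funext hcoeff]
  have hA : lommelA μ (-ν) = lommelA μ ν := by
    unfold lommelA
    have h1 : μ / 2 + -ν / 2 + 1 / 2 = μ / 2 - ν / 2 + 1 / 2 := by ring
    have h2 : μ / 2 - -ν / 2 + 1 / 2 = μ / 2 + ν / 2 + 1 / 2 := by ring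
    rw [h1, h2]; ring
  have hJneg : besselJ (-ν) z =
      besselJ ν z * Complex.cos (ν * (Real.pi : ℂ)) -
        besselY ν z * Complex.sin (ν * (Real.pi : ℂ)) := by
    unfold besselY
    field_simp
    ring
  have htrig : Complex.sin ((μ - -ν) * (Real.pi : ℂ) / 2) * Complex.cos (ν * (Real.pi : ℂ)) -
      Complex.cos ((μ - -ν) * (Real.pi : ℂ) / 2) * Complex.sin (ν * (Real.pi : ℂ)) =
      Complex.sin ((μ - ν) * (Real.pi : ℂ) / 2) := by
    rw [← Complex.sin_sub]
    congr 1; ring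
  have hplus : (μ - -ν) * (Real.pi : ℂ) / 2 = (μ + ν) * (Real.pi : ℂ) / 2 := by ring
  unfold lommelS0
  rw [hls, hA, hJneg, hplus]
  have hpiν : (Real.pi : ℂ) * ν = ν * (Real.pi : ℂ) := by ring
  rw [hpiν]
  have key : Complex.sin ((μ + ν) * (Real.pi : ℂ) / 2) =
      Complex.sin ((μ - ν) * (Real.pi : ℂ) / 2) * Complex.cos (ν * (Real.pi : ℂ)) +
      Complex.cos ((μ - ν) * (Real.pi : ℂ) / 2) * Complex.sin (ν * (Real.pi : ℂ)) := by
    rw [← Complex.sin_add]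
    congr 1; ring
  have keyc : Complex.cos ((μ + ν) * (Real.pi : ℂ) / 2) =
      Complex.cos ((μ - ν) * (Real.pi : ℂ) / 2) * Complex.cos (ν * (Real.pi : ℂ)) -
      Complex.sin ((μ - ν) * (Real.pi : ℂ) / 2) * Complex.sin (ν * (Real.pi : ℂ)) := by
    rw [← Complex.cos_add]
    congr 1; ring
  rw [key, keyc]
  linear_combination lommelA μ ν * Complex.sin ((μ - ν) * (Real.pi : ℂ) / 2) *
    besselJ ν z * Complex.sin_sq_add_cos_sq (ν * (Real.pi : ℂ))
end

section
/- Let μ, ν ∈ ℂ with Re ν > Re μ + 1, with ν noninteger, with (μ+2m−1)² ≠ ν² for every integer m ≥ 1, and with none of (μ±ν+1)/2 a nonpositive integer. Then for each j ∈ {0, 1, 2}, S^{(j)}_{μ,ν}(z) ~ z^{μ+1}/((μ+1)² − ν²) as z → 0 in the cut plane ℂ ∖ (−∞,0]; that is, z^{−μ−1} S^{(j)}_{μ,ν}(z) → 1/((μ+1)² − ν²) as z → 0 with z ∈ ℂ ∖ (−∞,0]. -/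
open Filter Topology Complex


lemma tsum_pow_tendsto (c : ℕ → ℂ) (hc : ∀ k, c k ≠ 0)
    (hr : Tendsto (fun k => ‖c (k+1)‖ / ‖c k‖) atTop (𝓝 0)) :
    Tendsto (fun z : ℂ => ∑' k, c k * z ^ (2*k)) (𝓝 0) (𝓝 (c 0)) := by
  have hS : Summable (fun k => ‖c k‖) := by
    refine summable_of_ratio_test_tendsto_lt_one zero_lt_one
      (Eventually.of_forall fun k => norm_ne_zero_iff.2 (hc k)) ?_
    simpa [norm_norm] using hr
  have hS1 : Summable (fun k => ‖c (k+1)‖) := (summable_nat_add_iff 1).2 hS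
  have hsum : ∀ z : ℂ, ‖z‖ ≤ 1 → Summable (fun k => c k * z ^ (2*k)) := by
    intro z hz
    refine Summable.of_norm_bounded hS fun k => ?_
    rw [norm_mul, norm_pow]
    calc ‖c k‖ * ‖z‖ ^ (2*k) ≤ ‖c k‖ * 1 ^ (2*k) := by gcongr
      _ = ‖c k‖ := by simp
  rw [← tendsto_sub_nhds_zero_iff]
  have hbd : ∀ z : ℂ, ‖z‖ ≤ 1 →
      ‖(∑' k, c k * z ^ (2*k)) - c 0‖ ≤ (∑' k, ‖c (k+1)‖) * (‖z‖ * ‖z‖) := by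
    intro z hz
    have hs2 : Summable (fun k => ‖c (k+1) * z ^ (2*(k+1))‖) := by
      refine Summable.of_nonneg_of_le (fun k => norm_nonneg _) (fun k => ?_) hS1
      rw [norm_mul, norm_pow]
      calc ‖c (k+1)‖ * ‖z‖ ^ (2*(k+1)) ≤ ‖c (k+1)‖ * 1 ^ (2*(k+1)) := by gcongr
        _ = ‖c (k+1)‖ := by simp
    rw [Summable.tsum_eq_zero_add (hsum z hz)]
    simp only [Nat.mul_zero, pow_zero, mul_one, add_sub_cancel_left]
    calc ‖∑' k, c (k+1) * z ^ (2*(k+1))‖ ≤ ∑' k, ‖c (k+1) * z ^ (2*(k+1))‖ :=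
          norm_tsum_le_tsum_norm hs2
      _ ≤ ∑' k, ‖c (k+1)‖ * (‖z‖ * ‖z‖) := by
          refine Summable.tsum_le_tsum (fun k => ?_) hs2 (hS1.mul_right _)
          rw [norm_mul, norm_pow]
          have : ‖z‖ ^ (2*(k+1)) ≤ ‖z‖ * ‖z‖ := by
            calc ‖z‖ ^ (2*(k+1)) = ‖z‖ ^ (2*k) * (‖z‖ * ‖z‖) := by ring
              _ ≤ 1 ^ (2*k) * (‖z‖ * ‖z‖) := by gcongr
              _ = ‖z‖ * ‖z‖ := by simp
          gcongr
      _ = (∑' k, ‖c (k+1)‖) * (‖z‖ * ‖z‖) := tsum_mul_right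
  refine squeeze_zero_norm'
    (a := fun z : ℂ => (∑' k, ‖c (k+1)‖) * (‖z‖ * ‖z‖)) ?_ ?_
  · filter_upwards [Metric.closedBall_mem_nhds (0:ℂ) zero_lt_one] with z hz
    exact hbd z (by simpa [Complex.dist_eq] using hz)
  · have : Tendsto (fun z : ℂ => ‖z‖) (𝓝 0) (𝓝 0) := by
      simpa using (continuous_norm.tendsto (0:ℂ))
    simpa using ((this.mul this).const_mul (∑' k, ‖c (k+1)‖))



-- growth of the Lommel factors
lemma lommel_term_atTop (μ ν : ℂ) :
    Tendsto (fun m : ℕ => ‖(μ + 2*((m:ℂ)+1) - 1)^2 - ν^2‖) atTop atTop := by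
  have h0 : Tendsto (fun m : ℕ => 2*(m:ℝ)+1 - ‖μ‖) atTop atTop := by
    refine Tendsto.congr (fun m => by ring)
      (tendsto_atTop_add_const_right _ (1 - ‖μ‖)
        ((tendsto_natCast_atTop_atTop (R := ℝ)).const_mul_atTop two_pos))
  have h1 : Tendsto (fun m : ℕ => (2*(m:ℝ)+1 - ‖μ‖)^2 - ‖ν‖^2) atTop atTop := by
    apply tendsto_atTop_add_const_right
    simpa [pow_two] using h0.atTop_mul_atTop₀ h0
  refine tendsto_atTop_mono' _ ?_ h1
  filter_upwards [h0.eventually_ge_atTop 0] with m hm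
  set x : ℂ := μ + 2*((m:ℂ)+1) - 1 with hx
  have hxe : x = ((2*(m:ℝ)+1 : ℝ) : ℂ) + μ := by push_cast [hx]; ring
  have hxn : 2*(m:ℝ)+1 - ‖μ‖ ≤ ‖x‖ := by
    have h := norm_sub_norm_le (((2*(m:ℝ)+1 : ℝ)) : ℂ) (-μ)
    rw [sub_neg_eq_add, norm_neg, ← hxe] at h
    refine le_trans (le_of_eq ?_) h
    rw [Complex.norm_real, Real.norm_of_nonneg (by positivity)]
  calc (2*(m:ℝ)+1 - ‖μ‖)^2 - ‖ν‖^2 ≤ ‖x‖^2 - ‖ν‖^2 := by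
        gcongr
    _ = ‖x^2‖ - ‖ν^2‖ := by rw [norm_pow, norm_pow]
    _ ≤ ‖x^2 - ν^2‖ := norm_sub_norm_le _ _




lemma lommelCoeff_ne_zero (μ ν : ℂ)
    (ha : ∀ m : ℕ, (μ + 2 * ((m : ℂ) + 1) - 1) ^ 2 ≠ ν ^ 2) (k : ℕ) :
    lommelCoeff μ ν k ≠ 0 :=
  Finset.prod_ne_zero_iff.2 fun m _ => sub_ne_zero.2 (ha m)

lemma lommel_ratio (μ ν : ℂ)
    (ha : ∀ m : ℕ, (μ + 2 * ((m : ℂ) + 1) - 1) ^ 2 ≠ ν ^ 2) :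
    Tendsto (fun k : ℕ => ‖(-1:ℂ)^(k+1) / lommelCoeff μ ν (k+1+1)‖ /
      ‖(-1:ℂ)^k / lommelCoeff μ ν (k+1)‖) atTop (𝓝 0) := by
  have ht : ∀ m : ℕ, ((μ + 2 * ((m : ℂ) + 1) - 1) ^ 2 - ν ^ 2) ≠ 0 :=
    fun m => sub_ne_zero.2 (ha m)
  have hA := lommelCoeff_ne_zero μ ν ha
  have heq : ∀ k : ℕ, ‖(-1:ℂ)^(k+1) / lommelCoeff μ ν (k+1+1)‖ /
      ‖(-1:ℂ)^k / lommelCoeff μ ν (k+1)‖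
      = ‖(μ + 2 * (((k+1:ℕ) : ℂ) + 1) - 1) ^ 2 - ν ^ 2‖⁻¹ := by
    intro k
    have h2 : lommelCoeff μ ν (k+1+1) =
        lommelCoeff μ ν (k+1) * ((μ + 2 * (((k+1:ℕ) : ℂ) + 1) - 1) ^ 2 - ν ^ 2) :=
      Finset.prod_range_succ _ _
    rw [h2, norm_div, norm_div, norm_mul, norm_pow, norm_pow, norm_neg, norm_one, one_pow,
      one_pow]
    have hAk : ‖lommelCoeff μ ν (k+1)‖ ≠ 0 := norm_ne_zero_iff.2 (hA (k+1))
    have htk : ‖(μ + 2 * (((k+1:ℕ) : ℂ) + 1) - 1) ^ 2 - ν ^ 2‖ ≠ 0 :=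
      norm_ne_zero_iff.2 (ht (k+1))
    field_simp
  refine Tendsto.congr (fun k => (heq k).symm) ?_
  exact ((lommel_term_atTop μ ν).comp (tendsto_add_atTop_nat 1)).inv_tendsto_atTop

lemma bessel_gamma_ne (ν : ℂ) (hint : ∀ n : ℤ, ν ≠ (n : ℂ)) (k : ℕ) :
    Complex.Gamma (ν + (k:ℂ) + 1) ≠ 0 := by
  apply Complex.Gamma_ne_zero
  intro m hm
  apply hint (-(m:ℤ) - k - 1)
  push_cast
  linear_combination hm

lemma bessel_den_ne (ν : ℂ) (hint : ∀ n : ℤ, ν ≠ (n : ℂ)) (k : ℕ) :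
    ν + (k:ℂ) + 1 ≠ 0 := by
  intro h
  apply hint (-(k:ℤ) - 1)
  push_cast
  linear_combination h

lemma bessel_norm_atTop (ν : ℂ) : Tendsto (fun k : ℕ => ‖ν + (k:ℂ) + 1‖) atTop atTop := by
  have h0 : Tendsto (fun k : ℕ => (k:ℝ) + 1 - ‖ν‖) atTop atTop := by
    refine Tendsto.congr (fun k => by ring)
      (tendsto_atTop_add_const_right _ (1 - ‖ν‖) (tendsto_natCast_atTop_atTop (R := ℝ)))
  refine tendsto_atTop_mono' _ ?_ h0
  filter_upwards with k
  have h := norm_sub_norm_le ((((k:ℝ)+1 : ℝ)) : ℂ) (-ν)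
  rw [sub_neg_eq_add] at h
  have he : ((((k:ℝ)+1 : ℝ)) : ℂ) + ν = ν + (k:ℂ) + 1 := by push_cast; ring
  rw [he, norm_neg, Complex.norm_real, Real.norm_of_nonneg (by positivity)] at h
  exact h

lemma bessel_ratio (ν : ℂ) (hint : ∀ n : ℤ, ν ≠ (n : ℂ)) :
    Tendsto (fun k : ℕ =>
      ‖(-1:ℂ)^(k+1) / (((k+1).factorial : ℂ) * Complex.Gamma (ν + ((k+1:ℕ):ℂ) + 1))‖ /
      ‖(-1:ℂ)^k / ((k.factorial : ℂ) * Complex.Gamma (ν + (k:ℂ) + 1))‖) atTop (𝓝 0) := by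
  have hg := bessel_gamma_ne ν hint
  have hd := bessel_den_ne ν hint
  have heq : ∀ k : ℕ,
      ‖(-1:ℂ)^(k+1) / (((k+1).factorial : ℂ) * Complex.Gamma (ν + ((k+1:ℕ):ℂ) + 1))‖ /
      ‖(-1:ℂ)^k / ((k.factorial : ℂ) * Complex.Gamma (ν + (k:ℂ) + 1))‖
      = ‖((k:ℂ)+1) * (ν + (k:ℂ) + 1)‖⁻¹ := by
    intro k
    have hgam : Complex.Gamma (ν + ((k+1:ℕ):ℂ) + 1)
        = (ν + (k:ℂ) + 1) * Complex.Gamma (ν + (k:ℂ) + 1) := by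
      have he : ν + ((k+1:ℕ):ℂ) + 1 = (ν + (k:ℂ) + 1) + 1 := by push_cast; ring
      rw [he, Complex.Gamma_add_one _ (hd k)]
    have hfac : (((k+1).factorial : ℕ) : ℂ) = ((k:ℂ)+1) * (k.factorial : ℂ) := by
      rw [Nat.factorial_succ]; push_cast; ring
    rw [hgam, hfac]
    have h1 : ‖(k.factorial : ℂ)‖ ≠ 0 := norm_ne_zero_iff.2 (by exact_mod_cast k.factorial_ne_zero)
    have h2 : ‖Complex.Gamma (ν + (k:ℂ) + 1)‖ ≠ 0 := norm_ne_zero_iff.2 (hg k)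
    have h3 : ‖((k:ℂ)+1)‖ ≠ 0 := norm_ne_zero_iff.2 (Nat.cast_add_one_ne_zero k)
    have h4 : ‖(ν + (k:ℂ) + 1)‖ ≠ 0 := norm_ne_zero_iff.2 (hd k)
    rw [norm_div, norm_div, norm_pow, norm_pow, norm_neg, norm_one, one_pow, one_pow,
      norm_mul, norm_mul, norm_mul, norm_mul]
    have hf : ((k.factorial : ℝ)) ≠ 0 := by exact_mod_cast k.factorial_ne_zero
    have hG : ‖(Complex.Gamma (ν + (k:ℂ) + 1))‖ ≠ 0 := by simpa using hg k
    have hG' : ‖(Complex.Gamma (1 + ν + (k:ℂ)))‖ ≠ 0 := by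
      rw [show (1 + ν + (k:ℂ)) = ν + (k:ℂ) + 1 by ring]; exact hG
    rw [norm_mul]
    rw [one_div, one_div, div_eq_mul_inv, inv_inv, mul_inv, mul_inv, mul_inv]
    field_simp
  refine Tendsto.congr (fun k => (heq k).symm) ?_
  have hmul : Tendsto (fun k : ℕ => ‖((k:ℂ)+1) * (ν + (k:ℂ) + 1)‖) atTop atTop := by
    have h1 : Tendsto (fun k : ℕ => ‖((k:ℂ)+1)‖) atTop atTop := by
      have hb : Tendsto (fun k : ℕ => (k:ℝ) + 1) atTop atTop :=
        tendsto_atTop_add_const_right _ 1 (tendsto_natCast_atTop_atTop (R := ℝ))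
      refine Tendsto.congr (fun k => ?_) hb
      rw [show ((k:ℂ)+1) = (((k:ℝ)+1 : ℝ) : ℂ) by push_cast; ring,
        Complex.norm_real, Real.norm_of_nonneg (by positivity)]
    refine Tendsto.congr (fun k => (norm_mul _ _).symm) (h1.atTop_mul_atTop₀ (bessel_norm_atTop ν))
  exact hmul.inv_tendsto_atTop

lemma norm_cpow_le' (z w : ℂ) :
    ‖z ^ w‖ ≤ ‖z‖ ^ w.re * Real.exp (Real.pi * |w.im|) := by
  refine le_trans (Complex.norm_cpow_le z w) ?_
  rw [div_eq_mul_inv, ← Real.exp_neg]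
  gcongr
  · calc -(z.arg * w.im) ≤ |z.arg * w.im| := neg_le_abs _
      _ = |z.arg| * |w.im| := abs_mul _ _
      _ ≤ Real.pi * |w.im| := by
          gcongr
          exact Complex.abs_arg_le_pi z

lemma cpow_factor_tendsto (μ ν : ℂ) (hre : μ.re + 1 < ν.re) :
    Tendsto (fun z : ℂ => z ^ (-μ-1) * (z/2) ^ ν)
      (nhdsWithin 0 Complex.slitPlane) (𝓝 0) := by
  set e : ℝ := ν.re - (μ.re + 1) with he
  have he0 : 0 < e := by simp [he]; linarith
  set C : ℝ := Real.exp (Real.pi * |(-μ-1).im|) * (Real.exp (Real.pi * |ν.im|) * (1/2) ^ ν.re)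
    with hC
  refine squeeze_zero_norm' (a := fun z : ℂ => C * ‖z‖ ^ e) ?_ ?_
  · filter_upwards [self_mem_nhdsWithin] with z hz
    have hz0 : z ≠ 0 := Complex.slitPlane_ne_zero hz
    have hzn : (0:ℝ) < ‖z‖ := norm_pos_iff.2 hz0
    rw [norm_mul]
    calc ‖z ^ (-μ-1)‖ * ‖(z/2) ^ ν‖
        ≤ (‖z‖ ^ (-μ-1).re * Real.exp (Real.pi * |(-μ-1).im|)) *
          (‖z/2‖ ^ ν.re * Real.exp (Real.pi * |ν.im|)) := by
          gcongr <;> [exact norm_cpow_le' z (-μ-1); exact norm_cpow_le' (z/2) ν]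
      _ = C * ‖z‖ ^ e := by
          rw [norm_div, Complex.norm_ofNat]
          rw [show ‖z‖ / 2 = ‖z‖ * (1/2) by ring,
            Real.mul_rpow (norm_nonneg z) (by norm_num)]
          rw [hC, he, show (-μ-1).re = -(μ.re + 1) by simp; ring]
          rw [show ν.re - (μ.re+1) = -(μ.re+1) + ν.re by ring, Real.rpow_add hzn]
          ring
  · have hn : Tendsto (fun z : ℂ => ‖z‖) (nhdsWithin 0 Complex.slitPlane) (𝓝 0) := by
      simpa using (continuous_norm.tendsto (0:ℂ)).mono_left nhdsWithin_le_nhds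
    have := (hn.rpow_const (Or.inr he0.le)).const_mul C
    simpa [Real.zero_rpow he0.ne'] using this

lemma bessel_origin (μ ν : ℂ) (hre : μ.re + 1 < ν.re) (hint : ∀ n : ℤ, ν ≠ (n : ℂ)) :
    Tendsto (fun z : ℂ => z ^ (-μ-1) * besselJ ν z)
      (nhdsWithin 0 Complex.slitPlane) (𝓝 0) := by
  set d : ℕ → ℂ := fun k => (-1:ℂ)^k / ((k.factorial : ℂ) * Complex.Gamma (ν + (k:ℂ) + 1))
    with hd
  have hd0 : ∀ k, d k ≠ 0 := fun k => div_ne_zero (pow_ne_zero _ (by norm_num))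
    (mul_ne_zero (Nat.cast_ne_zero.2 k.factorial_ne_zero) (bessel_gamma_ne ν hint k))
  have hG : Tendsto (fun w : ℂ => ∑' k, d k * w ^ (2*k)) (𝓝 0) (𝓝 (d 0)) :=
    tsum_pow_tendsto d hd0 (by simpa [hd] using bessel_ratio ν hint)
  have hG2 : Tendsto (fun z : ℂ => ∑' k, d k * (z/2) ^ (2*k))
      (nhdsWithin 0 Complex.slitPlane) (𝓝 (d 0)) := by
    refine hG.comp ?_
    have h2 : Tendsto (fun z : ℂ => z/2) (𝓝 0) (𝓝 0) := by
      simpa using (tendsto_id (α := ℂ)).div_const (2:ℂ) |>.mono_left (le_refl (𝓝 0))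
    exact h2.mono_left nhdsWithin_le_nhds
  have hmain : Tendsto (fun z : ℂ => (z ^ (-μ-1) * (z/2) ^ ν) * ∑' k, d k * (z/2) ^ (2*k))
      (nhdsWithin 0 Complex.slitPlane) (𝓝 0) := by
    simpa using (cpow_factor_tendsto μ ν hre).mul hG2
  refine Tendsto.congr' ?_ hmain
  filter_upwards [self_mem_nhdsWithin] with z hz
  have hz0 : z ≠ 0 := Complex.slitPlane_ne_zero hz
  have hw : z/2 ≠ 0 := div_ne_zero hz0 two_ne_zero
  have hterm : ∀ k : ℕ, (-1:ℂ)^k * (z/2) ^ (ν + 2*(k:ℂ)) /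
      ((k.factorial:ℂ) * Complex.Gamma (ν + (k:ℂ) + 1))
      = (z/2)^ν * (d k * (z/2)^(2*k)) := by
    intro k
    rw [Complex.cpow_add _ _ hw, show (2*(k:ℂ)) = ((2*k : ℕ) : ℂ) by push_cast; ring,
      Complex.cpow_natCast]
    rw [hd]
    ring
  rw [besselJ, tsum_congr hterm, tsum_mul_left, ← mul_assoc]

/-- Behaviour at the origin: for `Re ν > Re μ + 1` (ν noninteger, parameters admissible),
`z^(-μ-1) S^(j)_{μ,ν}(z) → 1/((μ+1)² - ν²)` as `z → 0` in the cut plane, for `j = 0, 1, 2`. -/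
theorem lommelSj_origin (μ ν : ℂ) (hre : μ.re + 1 < ν.re) (hint : ∀ n : ℤ, ν ≠ (n : ℂ))
    (ha : ∀ m : ℕ, (μ + 2 * ((m : ℂ) + 1) - 1) ^ 2 ≠ ν ^ 2)
    (hg : ∀ n : ℕ, (μ + ν + 1) / 2 ≠ -(n : ℂ) ∧ (μ - ν + 1) / 2 ≠ -(n : ℂ)) :
    Filter.Tendsto (fun z : ℂ => z ^ (-μ - 1) * lommelS0 μ ν z)
      (nhdsWithin 0 Complex.slitPlane) (nhds (1 / ((μ + 1) ^ 2 - ν ^ 2))) ∧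
    Filter.Tendsto (fun z : ℂ => z ^ (-μ - 1) * lommelS1 μ ν z)
      (nhdsWithin 0 Complex.slitPlane) (nhds (1 / ((μ + 1) ^ 2 - ν ^ 2))) ∧
    Filter.Tendsto (fun z : ℂ => z ^ (-μ - 1) * lommelS2 μ ν z)
      (nhdsWithin 0 Complex.slitPlane) (nhds (1 / ((μ + 1) ^ 2 - ν ^ 2))) := by

  have ht : ∀ m : ℕ, ((μ + 2 * ((m : ℂ) + 1) - 1) ^ 2 - ν ^ 2) ≠ 0 :=
    fun m => sub_ne_zero.2 (ha m)
  set c : ℕ → ℂ := fun k => (-1:ℂ)^k / lommelCoeff μ ν (k+1) with hc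
  have hc0 : ∀ k, c k ≠ 0 := fun k => div_ne_zero (pow_ne_zero _ (by norm_num))
    (lommelCoeff_ne_zero μ ν ha (k+1))
  have hF : Tendsto (fun z : ℂ => ∑' k, c k * z ^ (2*k)) (𝓝 0) (𝓝 (c 0)) :=
    tsum_pow_tendsto c hc0 (by simpa [hc] using lommel_ratio μ ν ha)
  have hc1 : lommelCoeff μ ν 1 = (μ+1)^2 - ν^2 := by
    rw [lommelCoeff, Finset.prod_range_one]
    push_cast
    ring_nf
  have hc0v : c 0 = 1 / ((μ+1)^2 - ν^2) := by
    rw [hc]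
    simp [hc1]
  have hFs : Tendsto (fun z : ℂ => ∑' k, c k * z ^ (2*k))
      (nhdsWithin 0 Complex.slitPlane) (𝓝 (1/((μ+1)^2 - ν^2))) := by
    rw [← hc0v]
    exact hF.mono_left nhdsWithin_le_nhds
  have hlom : ∀ᶠ z in nhdsWithin 0 Complex.slitPlane,
      z ^ (-μ-1) * lommels μ ν z = ∑' k, c k * z^(2*k) := by
    filter_upwards [self_mem_nhdsWithin] with z hz
    have hz0 : z ≠ 0 := Complex.slitPlane_ne_zero hz
    rw [lommels, ← mul_assoc, ← Complex.cpow_add _ _ hz0,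
      show (-μ-1) + (μ+1) = 0 by ring, Complex.cpow_zero, one_mul]
    exact tsum_congr fun k => by rw [hc]; ring
  have hB := bessel_origin μ ν hre hint
  have key : ∀ C : ℂ, Tendsto (fun z : ℂ =>
      z ^ (-μ-1) * lommels μ ν z + C * (z ^ (-μ-1) * besselJ ν z))
      (nhdsWithin 0 Complex.slitPlane) (𝓝 (1/((μ+1)^2 - ν^2))) := by
    intro C
    have h1 : Tendsto (fun z : ℂ => (∑' k, c k * z^(2*k)) + C * (z ^ (-μ-1) * besselJ ν z))
        (nhdsWithin 0 Complex.slitPlane) (𝓝 (1/((μ+1)^2 - ν^2))) := by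
      simpa using hFs.add (hB.const_mul C)
    refine Tendsto.congr' ?_ h1
    filter_upwards [hlom] with z hz
    rw [hz]
  refine ⟨?_, ?_, ?_⟩
  · refine (key (lommelA μ ν * Complex.sin ((μ - ν) * (Real.pi:ℂ)/2))).congr (fun z => ?_)
    rw [lommelS0]
    ring
  · refine (key (-(Complex.I * Complex.exp ((μ - ν) * (Real.pi:ℂ) * Complex.I / 2) *
      lommelA μ ν))).congr (fun z => ?_)
    rw [lommelS1]
    ring
  · refine (key (Complex.I * Complex.exp ((ν - μ) * (Real.pi:ℂ) * Complex.I / 2) *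
      lommelA μ ν)).congr (fun z => ?_)
    rw [lommelS2]
    ring
end

section
/- Let ν > 0 be real and not an integer, and define the Anger function by 𝐉_ν(z) = (1/π) ∫_0^π cos(νθ − z sin θ) dθ for z ∈ ℂ. Set 𝐣_0(ν) = sin(πν)/π and 𝐣_{−1}(ν) = −ν sin(πν)/π. Then for every z in the cut plane ℂ ∖ (−∞,0], and for each choice 𝒮 ∈ {S, S^{(0)}, S^{(1)}, S^{(2)}}: 𝐉_ν(z) = 𝐣_0(ν) 𝒮_{0,ν}(z) + 𝐣_{−1}(ν) 𝒮_{−1,ν}(z) + J_ν(z). -/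
/-- The Anger function `𝐉_ν(z) = (1/π) ∫_0^π cos(νθ - z sin θ) dθ`. -/
noncomputable def angerJ (ν z : ℂ) : ℂ :=
  (1 / (Real.pi : ℂ)) * ∫ θ in (0 : ℝ)..Real.pi, Complex.cos (ν * (θ : ℂ) - z * Real.sin θ)

/-- `𝐣₀(ν) = sin(πν)/π`. -/
noncomputable def angerj0 (ν : ℝ) : ℂ := Complex.sin ((Real.pi : ℂ) * ν) / (Real.pi : ℂ)

/-- `𝐣₋₁(ν) = -ν sin(πν)/π`. -/
noncomputable def angerjm1 (ν : ℝ) : ℂ :=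
  -(ν : ℂ) * Complex.sin ((Real.pi : ℂ) * ν) / (Real.pi : ℂ)

section AuxProofs
open MeasureTheory Real

-- recursion for ∫ sin^n cos(νθ)
lemma rec_cos (ν : ℝ) (n : ℕ) :
    ((n + 2 : ℝ) ^ 2 - ν ^ 2) * ∫ θ in (0:ℝ)..π, Real.sin θ ^ (n + 2) * Real.cos (ν * θ)
      = (n + 2) * (n + 1) * ∫ θ in (0:ℝ)..π, Real.sin θ ^ n * Real.cos (ν * θ) := by
  set F : ℝ → ℝ := fun θ => Real.sin θ ^ (n + 1) *
    ((n + 2) * Real.cos θ * Real.cos (ν * θ) + ν * Real.sin θ * Real.sin (ν * θ)) with hF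
  have hderiv : ∀ θ ∈ Set.uIcc (0:ℝ) π, HasDerivAt F
      ((n + 2) * (n + 1) * (Real.sin θ ^ n * Real.cos (ν * θ))
        - ((n + 2 : ℝ) ^ 2 - ν ^ 2) * (Real.sin θ ^ (n + 2) * Real.cos (ν * θ))) θ := by
    intro θ _
    have hs : HasDerivAt Real.sin (Real.cos θ) θ := Real.hasDerivAt_sin θ
    have hc : HasDerivAt Real.cos (-Real.sin θ) θ := Real.hasDerivAt_cos θ
    have hid : HasDerivAt (fun θ : ℝ => ν * θ) ν θ := by
      simpa using (hasDerivAt_id θ).const_mul ν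
    have hsv : HasDerivAt (fun θ => Real.sin (ν * θ)) (Real.cos (ν * θ) * ν) θ :=
      (Real.hasDerivAt_sin (ν * θ)).comp θ hid
    have hcv : HasDerivAt (fun θ => Real.cos (ν * θ)) (-Real.sin (ν * θ) * ν) θ :=
      (Real.hasDerivAt_cos (ν * θ)).comp θ hid
    have h1 : HasDerivAt (fun θ => Real.sin θ ^ (n + 1))
        ((n + 1) * Real.sin θ ^ n * Real.cos θ) θ := by
      simpa using (hs.fun_pow (n + 1))
    have h2 : HasDerivAt (fun θ => (n + 2 : ℝ) * Real.cos θ * Real.cos (ν * θ) +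
        ν * Real.sin θ * Real.sin (ν * θ))
        (((n+2:ℝ) * (-Real.sin θ)) * Real.cos (ν * θ) + ((n+2:ℝ) * Real.cos θ) * (-Real.sin (ν * θ) * ν)
          + ((ν * Real.cos θ) * Real.sin (ν * θ) + (ν * Real.sin θ) * (Real.cos (ν * θ) * ν))) θ := by
      exact (((hc.const_mul _).mul hcv)).add ((hs.const_mul ν).mul hsv)
    have := h1.fun_mul h2
    refine this.congr_deriv (Eq.symm ?_)
    have hpy : Real.sin θ ^ 2 + Real.cos θ ^ 2 = 1 := Real.sin_sq_add_cos_sq θ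
    have hexp : Real.sin θ ^ (n + 2) = Real.sin θ ^ n * Real.sin θ ^ 2 := by ring
    have hexp1 : Real.sin θ ^ (n + 1) = Real.sin θ ^ n * Real.sin θ := by ring
    rw [hexp, hexp1]
    linear_combination (-((n:ℝ)+1)*((n:ℝ)+2)*Real.sin θ^n * Real.cos (ν*θ)) * hpy
  have hcont : ∀ m : ℕ, IntervalIntegrable (fun θ => Real.sin θ ^ m * Real.cos (ν * θ))
      MeasureTheory.volume 0 π := by
    intro m
    exact (Continuous.mul (by fun_prop) (by fun_prop)).intervalIntegrable 0 π
  have hFTC := intervalIntegral.integral_eq_sub_of_hasDerivAt hderiv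
    (((hcont n).const_mul _).sub ((hcont (n+2)).const_mul _))
  have hF0 : F 0 = 0 := by simp [hF]
  have hFpi : F π = 0 := by simp [hF]
  rw [intervalIntegral.integral_sub ((hcont n).const_mul _) ((hcont (n+2)).const_mul _),
    intervalIntegral.integral_const_mul, intervalIntegral.integral_const_mul, hF0, hFpi] at hFTC
  linarith

lemma rec_sin (ν : ℝ) (n : ℕ) :
    ((n + 2 : ℝ) ^ 2 - ν ^ 2) * ∫ θ in (0:ℝ)..π, Real.sin θ ^ (n + 2) * Real.sin (ν * θ)
      = (n + 2) * (n + 1) * ∫ θ in (0:ℝ)..π, Real.sin θ ^ n * Real.sin (ν * θ) := by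
  set F : ℝ → ℝ := fun θ => Real.sin θ ^ (n + 1) *
    ((n + 2) * Real.cos θ * Real.sin (ν * θ) - ν * Real.sin θ * Real.cos (ν * θ)) with hF
  have hderiv : ∀ θ ∈ Set.uIcc (0:ℝ) π, HasDerivAt F
      ((n + 2) * (n + 1) * (Real.sin θ ^ n * Real.sin (ν * θ))
        - ((n + 2 : ℝ) ^ 2 - ν ^ 2) * (Real.sin θ ^ (n + 2) * Real.sin (ν * θ))) θ := by
    intro θ _
    have hs : HasDerivAt Real.sin (Real.cos θ) θ := Real.hasDerivAt_sin θ
    have hc : HasDerivAt Real.cos (-Real.sin θ) θ := Real.hasDerivAt_cos θ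
    have hid : HasDerivAt (fun θ : ℝ => ν * θ) ν θ := by
      simpa using (hasDerivAt_id θ).const_mul ν
    have hsv : HasDerivAt (fun θ => Real.sin (ν * θ)) (Real.cos (ν * θ) * ν) θ :=
      (Real.hasDerivAt_sin (ν * θ)).comp θ hid
    have hcv : HasDerivAt (fun θ => Real.cos (ν * θ)) (-Real.sin (ν * θ) * ν) θ :=
      (Real.hasDerivAt_cos (ν * θ)).comp θ hid
    have h1 : HasDerivAt (fun θ => Real.sin θ ^ (n + 1))
        ((n + 1) * Real.sin θ ^ n * Real.cos θ) θ := by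
      simpa using (hs.fun_pow (n + 1))
    have h2 : HasDerivAt (fun θ => (n + 2 : ℝ) * Real.cos θ * Real.sin (ν * θ) -
        ν * Real.sin θ * Real.cos (ν * θ))
        (((n+2:ℝ) * (-Real.sin θ)) * Real.sin (ν * θ) + ((n+2:ℝ) * Real.cos θ) * (Real.cos (ν * θ) * ν)
          - ((ν * Real.cos θ) * Real.cos (ν * θ) + (ν * Real.sin θ) * (-Real.sin (ν * θ) * ν))) θ := by
      exact (((hc.const_mul _).mul hsv)).sub ((hs.const_mul ν).mul hcv)
    have := h1.fun_mul h2
    refine this.congr_deriv (Eq.symm ?_)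
    have hpy : Real.sin θ ^ 2 + Real.cos θ ^ 2 = 1 := Real.sin_sq_add_cos_sq θ
    linear_combination (-((n:ℝ)+1)*((n:ℝ)+2)*Real.sin θ^n * Real.sin (ν*θ)) * hpy
  have hcont : ∀ m : ℕ, IntervalIntegrable (fun θ => Real.sin θ ^ m * Real.sin (ν * θ))
      MeasureTheory.volume 0 π := by
    intro m
    exact (Continuous.mul (by fun_prop) (by fun_prop)).intervalIntegrable 0 π
  have hFTC := intervalIntegral.integral_eq_sub_of_hasDerivAt hderiv
    (((hcont n).const_mul _).sub ((hcont (n+2)).const_mul _))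
  have hF0 : F 0 = 0 := by simp [hF]
  have hFpi : F π = 0 := by simp [hF]
  rw [intervalIntegral.integral_sub ((hcont n).const_mul _) ((hcont (n+2)).const_mul _),
    intervalIntegral.integral_const_mul, intervalIntegral.integral_const_mul, hF0, hFpi] at hFTC
  linarith

lemma base_cos (ν : ℝ) : ν * ∫ θ in (0:ℝ)..π, Real.cos (ν * θ) = Real.sin (ν * π) := by
  have hderiv : ∀ θ ∈ Set.uIcc (0:ℝ) π, HasDerivAt (fun θ => Real.sin (ν * θ))
      (ν * Real.cos (ν * θ)) θ := by
    intro θ _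
    have hid : HasDerivAt (fun θ : ℝ => ν * θ) ν θ := by
      simpa using (hasDerivAt_id θ).const_mul ν
    exact ((Real.hasDerivAt_sin (ν * θ)).comp θ hid).congr_deriv (mul_comm _ _)
  have hFTC := intervalIntegral.integral_eq_sub_of_hasDerivAt hderiv
    ((Continuous.intervalIntegrable (by fun_prop) 0 π))
  rw [intervalIntegral.integral_const_mul] at hFTC
  simpa using hFTC

lemma base_sin (ν : ℝ) : (1 - ν ^ 2) * ∫ θ in (0:ℝ)..π, Real.sin θ * Real.sin (ν * θ)
    = Real.sin (ν * π) := by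
  have hderiv : ∀ θ ∈ Set.uIcc (0:ℝ) π, HasDerivAt
      (fun θ => ν * Real.cos (ν * θ) * Real.sin θ - Real.sin (ν * θ) * Real.cos θ)
      ((1 - ν ^ 2) * (Real.sin θ * Real.sin (ν * θ))) θ := by
    intro θ _
    have hid : HasDerivAt (fun θ : ℝ => ν * θ) ν θ := by
      simpa using (hasDerivAt_id θ).const_mul ν
    have hsv : HasDerivAt (fun θ => Real.sin (ν * θ)) (Real.cos (ν * θ) * ν) θ :=
      (Real.hasDerivAt_sin (ν * θ)).comp θ hid
    have hcv : HasDerivAt (fun θ => Real.cos (ν * θ)) (-Real.sin (ν * θ) * ν) θ :=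
      (Real.hasDerivAt_cos (ν * θ)).comp θ hid
    have h := ((hcv.const_mul ν).fun_mul (Real.hasDerivAt_sin θ)).fun_sub
      (hsv.fun_mul (Real.hasDerivAt_cos θ))
    refine h.congr_deriv (Eq.symm ?_)
    ring
  have hFTC := intervalIntegral.integral_eq_sub_of_hasDerivAt hderiv
    ((Continuous.intervalIntegrable (by fun_prop) 0 π).const_mul _)
  rw [intervalIntegral.integral_const_mul] at hFTC
  simpa using hFTC

lemma prod_cos (ν : ℝ) (k : ℕ) :
    (∫ θ in (0:ℝ)..π, Real.sin θ ^ (2 * k) * Real.cos (ν * θ)) *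
      ∏ m ∈ Finset.range (k + 1), ((2 * m : ℝ) ^ 2 - ν ^ 2)
      = -ν * Real.sin (ν * π) * (2 * k).factorial := by
  induction k with
  | zero =>
      have := base_cos ν
      norm_num [Finset.prod_range_one]
      linear_combination ν * this
  | succ k ih =>
      rw [Finset.prod_range_succ, show 2 * (k + 1) = 2 * k + 2 from by ring]
      have hrec := rec_cos ν (2 * k)
      push_cast at hrec
      have hfac : ((2 * k + 2).factorial : ℝ)
          = (2 * (k:ℝ) + 2) * (2 * (k:ℝ) + 1) * (2 * k).factorial := by
        rw [show 2 * k + 2 = (2 * k + 1) + 1 from by ring, Nat.factorial_succ, Nat.factorial_succ]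
        push_cast; ring
      rw [hfac]
      push_cast
      linear_combination (∏ m ∈ Finset.range (k + 1), ((2 * (m:ℝ)) ^ 2 - ν ^ 2)) * hrec
        + ((2 * (k:ℝ) + 2) * (2 * (k:ℝ) + 1)) * ih

lemma prod_sin (ν : ℝ) (k : ℕ) :
    (∫ θ in (0:ℝ)..π, Real.sin θ ^ (2 * k + 1) * Real.sin (ν * θ)) *
      ∏ m ∈ Finset.range (k + 1), ((2 * m + 1 : ℝ) ^ 2 - ν ^ 2)
      = Real.sin (ν * π) * (2 * k + 1).factorial := by
  induction k with
  | zero =>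
      have := base_sin ν
      norm_num [Finset.prod_range_one]
      linear_combination this
  | succ k ih =>
      rw [Finset.prod_range_succ, show 2 * (k + 1) + 1 = (2 * k + 1) + 2 from by ring]
      have hrec := rec_sin ν (2 * k + 1)
      push_cast at hrec
      have hfac : (((2 * k + 1) + 2).factorial : ℝ)
          = (2 * (k:ℝ) + 3) * (2 * (k:ℝ) + 2) * (2 * k + 1).factorial := by
        rw [show (2 * k + 1) + 2 = ((2 * k + 1) + 1) + 1 from by ring,
          Nat.factorial_succ, Nat.factorial_succ]
        push_cast; ring
      rw [hfac]
      push_cast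
      linear_combination (∏ m ∈ Finset.range (k + 1), ((2 * (m:ℝ) + 1) ^ 2 - ν ^ 2)) * hrec
        + ((2 * (k:ℝ) + 3) * (2 * (k:ℝ) + 2)) * ih

lemma interchange_even (ν : ℝ) (z : ℂ) :
    (∫ θ in (0:ℝ)..π, (Real.cos (ν*θ) : ℂ) * Complex.cos (z * (Real.sin θ : ℂ)))
      = ∑' k : ℕ, ((-1:ℂ)^k * z^(2*k) / ((2*k).factorial : ℂ)) *
          ((∫ θ in (0:ℝ)..π, Real.sin θ ^ (2*k) * Real.cos (ν*θ) : ℝ) : ℂ) := by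
  set F : ℕ → ℝ → ℂ := fun k θ =>
    ((-1:ℂ)^k * z^(2*k) / ((2*k).factorial : ℂ)) *
      ((Real.sin θ ^ (2*k) * Real.cos (ν*θ) : ℝ) : ℂ) with hFdef
  have hpt : ∀ θ : ℝ, (Real.cos (ν*θ) : ℂ) * Complex.cos (z * (Real.sin θ : ℂ))
      = ∑' k, F k θ := by
    intro θ
    rw [Complex.cos_eq_tsum, ← tsum_mul_left]
    congr 1; funext k
    rw [hFdef]
    push_cast
    ring
  have hint : ∀ k, IntegrableOn (F k) (Set.Ioc 0 π) volume := by
    intro k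
    apply Continuous.integrableOn_Ioc
    fun_prop
  have hbound : ∀ k, ∫ θ in Set.Ioc (0:ℝ) π, ‖F k θ‖ ≤ π * (‖z‖^(2*k) / (2*k).factorial) := by
    intro k
    have hle : ∀ θ ∈ Set.Ioc (0:ℝ) π, ‖F k θ‖ ≤ ‖z‖^(2*k) / (2*k).factorial := by
      intro θ _
      rw [hFdef]
      simp only [norm_mul, norm_div, norm_pow, norm_neg, norm_one, one_pow, one_mul,
        Complex.norm_real, Complex.norm_natCast, Real.norm_eq_abs, abs_mul, abs_pow]
      have h1 : |Real.sin θ| ≤ 1 := Real.abs_sin_le_one θ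
      have h2 : |Real.cos (ν*θ)| ≤ 1 := Real.abs_cos_le_one _
      have h3 : |Real.sin θ|^(2*k) * |Real.cos (ν*θ)| ≤ 1 := by
        nlinarith [pow_le_one₀ (n := 2*k) (abs_nonneg (Real.sin θ)) h1,
          pow_nonneg (abs_nonneg (Real.sin θ)) (2*k), abs_nonneg (Real.cos (ν*θ))]
      have ha : (0:ℝ) ≤ ‖z‖^(2*k) / ((2*k).factorial : ℝ) := by positivity
      nlinarith [mul_le_mul_of_nonneg_left h3 ha]
    calc ∫ θ in Set.Ioc (0:ℝ) π, ‖F k θ‖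
        ≤ ∫ _θ in Set.Ioc (0:ℝ) π, (‖z‖^(2*k) / (2*k).factorial : ℝ) := by
          apply setIntegral_mono_on (hint k).norm (integrableOn_const (by
            rw [Real.volume_Ioc]; exact ENNReal.ofReal_ne_top)) measurableSet_Ioc hle
      _ = π * (‖z‖^(2*k) / (2*k).factorial) := by
          rw [setIntegral_const, Real.volume_real_Ioc_of_le Real.pi_nonneg, smul_eq_mul, sub_zero]
  have hsum : Summable fun k => ∫ θ in Set.Ioc (0:ℝ) π, ‖F k θ‖ := by
    have h1 : Summable (fun k : ℕ => ‖z‖^k / k.factorial) := Real.summable_pow_div_factorial _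
    have h2 : Summable (fun k : ℕ => ‖z‖^(2*k) / (2*k).factorial) :=
      h1.comp_injective (fun a b hab => by omega)
    exact Summable.of_nonneg_of_le
      (fun k => integral_nonneg (fun θ => norm_nonneg _)) hbound (h2.mul_left π)
  rw [intervalIntegral.integral_of_le Real.pi_nonneg]
  have : (fun θ => (Real.cos (ν*θ) : ℂ) * Complex.cos (z * (Real.sin θ : ℂ)))
      = fun θ => ∑' k, F k θ := funext hpt
  rw [this, ← integral_tsum_of_summable_integral_norm hint hsum]
  congr 1; funext k
  rw [hFdef]
  simp only
  rw [integral_const_mul, ← intervalIntegral.integral_of_le Real.pi_nonneg,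
    intervalIntegral.integral_ofReal]

lemma interchange_odd (ν : ℝ) (z : ℂ) :
    (∫ θ in (0:ℝ)..π, (Real.sin (ν*θ) : ℂ) * Complex.sin (z * (Real.sin θ : ℂ)))
      = ∑' k : ℕ, ((-1:ℂ)^k * z^(2*k+1) / ((2*k+1).factorial : ℂ)) *
          ((∫ θ in (0:ℝ)..π, Real.sin θ ^ (2*k+1) * Real.sin (ν*θ) : ℝ) : ℂ) := by
  set F : ℕ → ℝ → ℂ := fun k θ =>
    ((-1:ℂ)^k * z^(2*k+1) / ((2*k+1).factorial : ℂ)) *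
      ((Real.sin θ ^ (2*k+1) * Real.sin (ν*θ) : ℝ) : ℂ) with hFdef
  have hpt : ∀ θ : ℝ, (Real.sin (ν*θ) : ℂ) * Complex.sin (z * (Real.sin θ : ℂ))
      = ∑' k, F k θ := by
    intro θ
    rw [Complex.sin_eq_tsum, ← tsum_mul_left]
    congr 1; funext k
    rw [hFdef]
    push_cast
    ring
  have hint : ∀ k, IntegrableOn (F k) (Set.Ioc 0 π) volume := by
    intro k
    apply Continuous.integrableOn_Ioc
    fun_prop
  have hbound : ∀ k, ∫ θ in Set.Ioc (0:ℝ) π, ‖F k θ‖ ≤ π * (‖z‖^(2*k+1) / (2*k+1).factorial) := by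
    intro k
    have hle : ∀ θ ∈ Set.Ioc (0:ℝ) π, ‖F k θ‖ ≤ ‖z‖^(2*k+1) / (2*k+1).factorial := by
      intro θ _
      rw [hFdef]
      simp only [norm_mul, norm_div, norm_pow, norm_neg, norm_one, one_pow, one_mul,
        Complex.norm_real, Complex.norm_natCast, Real.norm_eq_abs, abs_mul, abs_pow]
      have h1 : |Real.sin θ| ≤ 1 := Real.abs_sin_le_one θ
      have h2 : |Real.sin (ν*θ)| ≤ 1 := Real.abs_sin_le_one _
      have h3 : |Real.sin θ|^(2*k+1) * |Real.sin (ν*θ)| ≤ 1 := by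
        nlinarith [pow_le_one₀ (n := 2*k+1) (abs_nonneg (Real.sin θ)) h1,
          pow_nonneg (abs_nonneg (Real.sin θ)) (2*k+1), abs_nonneg (Real.sin (ν*θ))]
      have ha : (0:ℝ) ≤ ‖z‖^(2*k+1) / ((2*k+1).factorial : ℝ) := by positivity
      nlinarith [mul_le_mul_of_nonneg_left h3 ha]
    calc ∫ θ in Set.Ioc (0:ℝ) π, ‖F k θ‖
        ≤ ∫ _θ in Set.Ioc (0:ℝ) π, (‖z‖^(2*k+1) / (2*k+1).factorial : ℝ) := by
          apply setIntegral_mono_on (hint k).norm (integrableOn_const (by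
            rw [Real.volume_Ioc]; exact ENNReal.ofReal_ne_top)) measurableSet_Ioc hle
      _ = π * (‖z‖^(2*k+1) / (2*k+1).factorial) := by
          rw [setIntegral_const, Real.volume_real_Ioc_of_le Real.pi_nonneg, smul_eq_mul, sub_zero]
  have hsum : Summable fun k => ∫ θ in Set.Ioc (0:ℝ) π, ‖F k θ‖ := by
    have h1 : Summable (fun k : ℕ => ‖z‖^k / k.factorial) := Real.summable_pow_div_factorial _
    have h2 : Summable (fun k : ℕ => ‖z‖^(2*k+1) / (2*k+1).factorial) :=
      h1.comp_injective (fun a b hab => by omega)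
    exact Summable.of_nonneg_of_le
      (fun k => integral_nonneg (fun θ => norm_nonneg _)) hbound (h2.mul_left π)
  rw [intervalIntegral.integral_of_le Real.pi_nonneg]
  have : (fun θ => (Real.sin (ν*θ) : ℂ) * Complex.sin (z * (Real.sin θ : ℂ)))
      = fun θ => ∑' k, F k θ := funext hpt
  rw [this, ← integral_tsum_of_summable_integral_norm hint hsum]
  congr 1; funext k
  rw [hFdef]
  simp only
  rw [integral_const_mul, ← intervalIntegral.integral_of_le Real.pi_nonneg,
    intervalIntegral.integral_ofReal]
lemma prod2_ne (ν : ℝ) (hint : ∀ n : ℤ, ν ≠ (n : ℝ)) (k : ℕ) :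
    (∏ m ∈ Finset.range (k+1), ((2*m:ℝ)^2 - ν^2)) ≠ 0 := by
  rw [Finset.prod_ne_zero_iff]
  intro m _ h
  have h2 : ((2*m:ℝ) - ν) * ((2*m:ℝ) + ν) = 0 := by linear_combination h
  rcases mul_eq_zero.1 h2 with h3 | h3
  · exact hint (2*m) (by push_cast; linarith)
  · exact hint (-(2*m)) (by push_cast; linarith)

lemma prod1_ne (ν : ℝ) (hint : ∀ n : ℤ, ν ≠ (n : ℝ)) (k : ℕ) :
    (∏ m ∈ Finset.range (k+1), ((2*m+1:ℝ)^2 - ν^2)) ≠ 0 := by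
  rw [Finset.prod_ne_zero_iff]
  intro m _ h
  have h2 : ((2*m+1:ℝ) - ν) * ((2*m+1:ℝ) + ν) = 0 := by linear_combination h
  rcases mul_eq_zero.1 h2 with h3 | h3
  · exact hint (2*m+1) (by push_cast; linarith)
  · exact hint (-(2*m+1)) (by push_cast; linarith)

lemma lc2_eq (ν : ℝ) (k : ℕ) : lommelCoeff (-1) (ν:ℂ) (k+1)
    = ((∏ m ∈ Finset.range (k+1), ((2*m:ℝ)^2 - ν^2) : ℝ) : ℂ) := by
  rw [lommelCoeff]
  push_cast
  exact Finset.prod_congr rfl fun m _ => by ring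

lemma lc1_eq (ν : ℝ) (k : ℕ) : lommelCoeff 0 (ν:ℂ) (k+1)
    = ((∏ m ∈ Finset.range (k+1), ((2*m+1:ℝ)^2 - ν^2) : ℝ) : ℂ) := by
  rw [lommelCoeff]
  push_cast
  exact Finset.prod_congr rfl fun m _ => by ring

lemma anger_core (ν : ℝ) (hint : ∀ n : ℤ, ν ≠ (n : ℝ)) (z : ℂ) :
    angerJ (ν:ℂ) z = angerj0 ν * lommels 0 (ν:ℂ) z + angerjm1 ν * lommels (-1) (ν:ℂ) z := by
  have hπ : (Real.pi:ℂ) ≠ 0 := by exact_mod_cast Real.pi_ne_zero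
  have hsplit : ∀ θ:ℝ, Complex.cos ((ν:ℂ)*(θ:ℂ) - z*(Real.sin θ:ℂ))
      = (Real.cos (ν*θ):ℂ) * Complex.cos (z*(Real.sin θ:ℂ))
        + (Real.sin (ν*θ):ℂ) * Complex.sin (z*(Real.sin θ:ℂ)) := by
    intro θ
    rw [show ((ν:ℂ)*(θ:ℂ)) = ((ν*θ:ℝ):ℂ) by push_cast; ring, Complex.cos_sub,
      ← Complex.ofReal_cos, ← Complex.ofReal_sin]
  have hI1 : IntervalIntegrable (fun θ:ℝ => (Real.cos (ν*θ):ℂ) * Complex.cos (z*(Real.sin θ:ℂ)))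
      MeasureTheory.volume 0 π := (Continuous.intervalIntegrable (by fun_prop) 0 π)
  have hI2 : IntervalIntegrable (fun θ:ℝ => (Real.sin (ν*θ):ℂ) * Complex.sin (z*(Real.sin θ:ℂ)))
      MeasureTheory.volume 0 π := (Continuous.intervalIntegrable (by fun_prop) 0 π)
  have hsplitI : angerJ (ν:ℂ) z = (1/(Real.pi:ℂ)) *
      ((∫ θ in (0:ℝ)..π, (Real.cos (ν*θ):ℂ) * Complex.cos (z*(Real.sin θ:ℂ)))
        + ∫ θ in (0:ℝ)..π, (Real.sin (ν*θ):ℂ) * Complex.sin (z*(Real.sin θ:ℂ))) := by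
    rw [angerJ, ← intervalIntegral.integral_add hI1 hI2]
    congr 1
    apply intervalIntegral.integral_congr
    intro θ _
    exact hsplit θ
  rw [hsplitI, interchange_even, interchange_odd]
  have hE : (1/(Real.pi:ℂ)) * (∑' k : ℕ, ((-1:ℂ)^k * z^(2*k) / ((2*k).factorial : ℂ)) *
        ((∫ θ in (0:ℝ)..π, Real.sin θ ^ (2*k) * Real.cos (ν*θ) : ℝ) : ℂ))
      = angerjm1 ν * lommels (-1) (ν:ℂ) z := by
    rw [lommels, show (-1:ℂ)+1 = 0 by ring, Complex.cpow_zero, one_mul,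
      ← tsum_mul_left, ← tsum_mul_left]
    apply tsum_congr
    intro k
    rw [lc2_eq, angerjm1]
    have hC := prod_cos ν k
    have hCk : ((∫ θ in (0:ℝ)..π, Real.sin θ ^ (2*k) * Real.cos (ν*θ) : ℝ):ℂ) *
        ((∏ m ∈ Finset.range (k+1), ((2*m:ℝ)^2 - ν^2) : ℝ) : ℂ)
        = -(ν:ℂ) * ((Real.sin (ν*π)):ℂ) * ((2*k).factorial:ℂ) := by
      rw [← Complex.ofReal_mul, hC]; push_cast; ring
    have hsin : Complex.sin ((Real.pi:ℂ)*(ν:ℂ)) = ((Real.sin (ν*π)):ℂ) := by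
      rw [show ((Real.pi:ℂ)*(ν:ℂ)) = ((ν*π:ℝ):ℂ) by push_cast; ring, Complex.ofReal_sin]
    rw [hsin]
    have hPne : ((∏ m ∈ Finset.range (k+1), ((2*m:ℝ)^2 - ν^2) : ℝ) : ℂ) ≠ 0 := by
      exact_mod_cast prod2_ne ν hint k
    have hfne : (((2*k).factorial : ℕ) : ℂ) ≠ 0 := by
      exact_mod_cast Nat.factorial_ne_zero (2*k)
    set I : ℂ := ((∫ θ in (0:ℝ)..π, Real.sin θ ^ (2*k) * Real.cos (ν*θ) : ℝ):ℂ) with hIdef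
    set P : ℂ := ((∏ m ∈ Finset.range (k+1), ((2*m:ℝ)^2 - ν^2) : ℝ) : ℂ) with hPdef
    set sc : ℂ := ((Real.sin (ν*π)):ℂ) with hscdef
    set fc : ℂ := (((2*k).factorial : ℕ) : ℂ) with hfcdef
    field_simp
    linear_combination z^(2*k) * hCk
  have hO : (1/(Real.pi:ℂ)) * (∑' k : ℕ, ((-1:ℂ)^k * z^(2*k+1) / ((2*k+1).factorial : ℂ)) *
        ((∫ θ in (0:ℝ)..π, Real.sin θ ^ (2*k+1) * Real.sin (ν*θ) : ℝ) : ℂ))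
      = angerj0 ν * lommels 0 (ν:ℂ) z := by
    rw [lommels, zero_add, Complex.cpow_one, ← tsum_mul_left, ← tsum_mul_left,
      ← tsum_mul_left]
    apply tsum_congr
    intro k
    rw [lc1_eq, angerj0]
    have hS := prod_sin ν k
    have hSk : ((∫ θ in (0:ℝ)..π, Real.sin θ ^ (2*k+1) * Real.sin (ν*θ) : ℝ):ℂ) *
        ((∏ m ∈ Finset.range (k+1), ((2*m+1:ℝ)^2 - ν^2) : ℝ) : ℂ)
        = ((Real.sin (ν*π)):ℂ) * ((2*k+1).factorial:ℂ) := by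
      rw [← Complex.ofReal_mul, hS]; push_cast; ring
    have hsin : Complex.sin ((Real.pi:ℂ)*(ν:ℂ)) = ((Real.sin (ν*π)):ℂ) := by
      rw [show ((Real.pi:ℂ)*(ν:ℂ)) = ((ν*π:ℝ):ℂ) by push_cast; ring, Complex.ofReal_sin]
    rw [hsin]
    have hPne : ((∏ m ∈ Finset.range (k+1), ((2*m+1:ℝ)^2 - ν^2) : ℝ) : ℂ) ≠ 0 := by
      exact_mod_cast prod1_ne ν hint k
    have hfne : (((2*k+1).factorial : ℕ) : ℂ) ≠ 0 := by
      exact_mod_cast Nat.factorial_ne_zero (2*k+1)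
    set I : ℂ := ((∫ θ in (0:ℝ)..π, Real.sin θ ^ (2*k+1) * Real.sin (ν*θ) : ℝ):ℂ) with hIdef
    set P : ℂ := ((∏ m ∈ Finset.range (k+1), ((2*m+1:ℝ)^2 - ν^2) : ℝ) : ℂ) with hPdef
    set sc : ℂ := ((Real.sin (ν*π)):ℂ) with hscdef
    set fc : ℂ := (((2*k+1).factorial : ℕ) : ℂ) with hfcdef
    field_simp
    linear_combination z^(2*k+1) * hSk
  rw [mul_add, hE, hO]
  ring

lemma sin_half_ne (ν : ℝ) (hint : ∀ n : ℤ, ν ≠ (n : ℝ)) :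
    Complex.sin ((Real.pi:ℂ) * ν / 2) ≠ 0 := by
  rw [Ne, Complex.sin_eq_zero_iff]
  rintro ⟨k, hk⟩
  have hπ : (Real.pi:ℂ) ≠ 0 := by exact_mod_cast Real.pi_ne_zero
  have : (ν:ℂ) = 2 * k := by
    field_simp at hk
    exact mul_left_cancel₀ hπ (by linear_combination (Real.pi:ℂ) * hk)
  exact hint (2*k) (by exact_mod_cast this)

lemma cos_half_ne (ν : ℝ) (hint : ∀ n : ℤ, ν ≠ (n : ℝ)) :
    Complex.cos ((Real.pi:ℂ) * ν / 2) ≠ 0 := by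
  rw [Ne, Complex.cos_eq_zero_iff]
  rintro ⟨k, hk⟩
  have hπ : (Real.pi:ℂ) ≠ 0 := by exact_mod_cast Real.pi_ne_zero
  have : (ν:ℂ) = 2 * k + 1 := by
    field_simp at hk
    exact mul_left_cancel₀ hπ (by linear_combination (Real.pi:ℂ) * hk)
  exact hint (2*k+1) (by exact_mod_cast this)

lemma lommelA0_eq (ν : ℝ) (hint : ∀ n : ℤ, ν ≠ (n : ℝ)) :
    lommelA 0 (ν:ℂ) = (Real.pi:ℂ) / (2 * Complex.cos ((Real.pi:ℂ) * ν / 2)) := by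
  have hc := cos_half_ne ν hint
  rw [lommelA]
  have h2 : (2:ℂ)^((0:ℂ)-1) = 1/2 := by
    rw [zero_sub, show (-1:ℂ) = ((-1:ℤ):ℂ) by norm_num, Complex.cpow_intCast]
    norm_num
  rw [h2, show (0:ℂ)/2 + (ν:ℂ)/2 + 1/2 = (ν:ℂ)/2 + 1/2 by ring,
    show (0:ℂ)/2 - (ν:ℂ)/2 + 1/2 = 1 - ((ν:ℂ)/2 + 1/2) by ring, mul_assoc,
    Complex.Gamma_mul_Gamma_one_sub,
    show (Real.pi:ℂ) * ((ν:ℂ)/2 + 1/2) = (Real.pi:ℂ) * ν / 2 + (Real.pi:ℂ)/2 by ring,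
    Complex.sin_add_pi_div_two]
  field_simp

lemma lommelA1_eq (ν : ℝ) (hν : (ν:ℂ) ≠ 0) (hint : ∀ n : ℤ, ν ≠ (n : ℝ)) :
    lommelA (-1) (ν:ℂ) = -(Real.pi:ℂ) / (2 * ν * Complex.sin ((Real.pi:ℂ) * ν / 2)) := by
  have hs := sin_half_ne ν hint
  rw [lommelA]
  have h2 : (2:ℂ)^((-1:ℂ)-1) = 1/4 := by
    rw [show (-1:ℂ)-1 = ((-2:ℤ):ℂ) by norm_num, Complex.cpow_intCast]
    norm_num
  have hadd : Complex.Gamma (-(ν:ℂ)/2 + 1) = (-(ν:ℂ)/2) * Complex.Gamma (-(ν:ℂ)/2) :=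
    Complex.Gamma_add_one _ (by simpa using div_ne_zero (neg_ne_zero.2 hν) two_ne_zero)
  have hrefl := Complex.Gamma_mul_Gamma_one_sub ((ν:ℂ)/2)
  rw [show 1 - (ν:ℂ)/2 = -(ν:ℂ)/2 + 1 by ring, hadd] at hrefl
  rw [h2, show (-1:ℂ)/2 + (ν:ℂ)/2 + 1/2 = (ν:ℂ)/2 by ring,
    show (-1:ℂ)/2 - (ν:ℂ)/2 + 1/2 = -(ν:ℂ)/2 by ring]
  rw [show (Real.pi:ℂ) * ((ν:ℂ)/2) = (Real.pi:ℂ) * ν / 2 by ring] at hrefl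
  field_simp at hrefl
  have hden : (2 * (ν:ℂ) * Complex.sin ((Real.pi:ℂ) * ν / 2)) ≠ 0 := by
    exact mul_ne_zero (mul_ne_zero two_ne_zero hν) hs
  rw [eq_div_iff hden]
  rw [show (ν:ℂ) * (Real.pi:ℂ) / 2 = (Real.pi:ℂ) * ν / 2 by ring, ← neg_div, eq_div_iff hs] at hrefl
  linear_combination (-1/2 : ℂ) * hrefl

lemma angerj0_eq (ν : ℝ) : angerj0 ν = 2 * Complex.sin ((Real.pi:ℂ) * ν / 2) *
    Complex.cos ((Real.pi:ℂ) * ν / 2) / (Real.pi:ℂ) := by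
  rw [angerj0, ← Complex.sin_two_mul]
  congr 2
  ring

lemma angerjm1_eq (ν : ℝ) : angerjm1 ν = -(ν:ℂ) * (2 * Complex.sin ((Real.pi:ℂ) * ν / 2) *
    Complex.cos ((Real.pi:ℂ) * ν / 2)) / (Real.pi:ℂ) := by
  rw [angerjm1, ← Complex.sin_two_mul]
  congr 3
  ring

lemma L1 (ν : ℝ) (hν : (ν:ℂ) ≠ 0) (hint : ∀ n : ℤ, ν ≠ (n : ℝ)) :
    angerj0 ν * (lommelA 0 (ν:ℂ) * Complex.sin ((0 - (ν:ℂ)) * (Real.pi:ℂ) / 2))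
      + angerjm1 ν * (lommelA (-1) (ν:ℂ) * Complex.sin ((-1 - (ν:ℂ)) * (Real.pi:ℂ) / 2))
      = -1 := by
  have hs := sin_half_ne ν hint
  have hc := cos_half_ne ν hint
  have hπ : (Real.pi:ℂ) ≠ 0 := by exact_mod_cast Real.pi_ne_zero
  rw [show ((0:ℂ) - ν) * (Real.pi:ℂ)/2 = -((Real.pi:ℂ) * ν / 2) by ring, Complex.sin_neg,
    show ((-1:ℂ) - ν) * (Real.pi:ℂ)/2 = -((Real.pi:ℂ) * ν / 2 + (Real.pi:ℂ)/2) by ring,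
    Complex.sin_neg, Complex.sin_add_pi_div_two,
    lommelA0_eq ν hint, lommelA1_eq ν hν hint, angerj0_eq, angerjm1_eq]
  set S := Complex.sin ((Real.pi:ℂ) * ν / 2) with hS
  set C := Complex.cos ((Real.pi:ℂ) * ν / 2) with hC
  have hpy : S^2 + C^2 = 1 := Complex.sin_sq_add_cos_sq _
  have e1 : 2 * S * C / (Real.pi:ℂ) * ((Real.pi:ℂ) / (2 * C) * -S) = -S^2 := by
    field_simp
  have e2 : -(ν:ℂ) * (2 * S * C) / (Real.pi:ℂ) *
      (-(Real.pi:ℂ) / (2 * (ν:ℂ) * S) * -C) = -C^2 := by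
    field_simp
  rw [e1, e2]
  linear_combination -hpy

lemma L2 (ν : ℝ) (hν : (ν:ℂ) ≠ 0) (hint : ∀ n : ℤ, ν ≠ (n : ℝ)) :
    angerj0 ν * (lommelA 0 (ν:ℂ) * Complex.cos ((0 - (ν:ℂ)) * (Real.pi:ℂ) / 2))
      + angerjm1 ν * (lommelA (-1) (ν:ℂ) * Complex.cos ((-1 - (ν:ℂ)) * (Real.pi:ℂ) / 2))
      = 0 := by
  have hs := sin_half_ne ν hint
  have hc := cos_half_ne ν hint
  have hπ : (Real.pi:ℂ) ≠ 0 := by exact_mod_cast Real.pi_ne_zero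
  rw [show ((0:ℂ) - ν) * (Real.pi:ℂ)/2 = -((Real.pi:ℂ) * ν / 2) by ring, Complex.cos_neg,
    show ((-1:ℂ) - ν) * (Real.pi:ℂ)/2 = -((Real.pi:ℂ) * ν / 2 + (Real.pi:ℂ)/2) by ring,
    Complex.cos_neg, Complex.cos_add_pi_div_two,
    lommelA0_eq ν hint, lommelA1_eq ν hν hint, angerj0_eq, angerjm1_eq]
  set S := Complex.sin ((Real.pi:ℂ) * ν / 2) with hS
  set C := Complex.cos ((Real.pi:ℂ) * ν / 2) with hC
  have e1 : 2 * S * C / (Real.pi:ℂ) * ((Real.pi:ℂ) / (2 * C) * C) = S * C := by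
    field_simp
  have e2 : -(ν:ℂ) * (2 * S * C) / (Real.pi:ℂ) *
      (-(Real.pi:ℂ) / (2 * (ν:ℂ) * S) * -S) = -(S * C) := by
    field_simp
  rw [e1, e2]
  ring
lemma expgen (w : ℂ) : Complex.exp (w * (Real.pi:ℂ) * Complex.I / 2)
    = Complex.cos (w * (Real.pi:ℂ) / 2) + Complex.sin (w * (Real.pi:ℂ) / 2) * Complex.I := by
  rw [show w * (Real.pi:ℂ) * Complex.I / 2 = (w * (Real.pi:ℂ) / 2) * Complex.I by ring,
    Complex.exp_mul_I]

lemma expflip (w : ℂ) : Complex.exp (-w * (Real.pi:ℂ) * Complex.I / 2)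
    = Complex.cos (w * (Real.pi:ℂ) / 2) - Complex.sin (w * (Real.pi:ℂ) / 2) * Complex.I := by
  rw [show -w * (Real.pi:ℂ) * Complex.I / 2 = (-(w * (Real.pi:ℂ) / 2)) * Complex.I by ring,
    Complex.exp_mul_I, Complex.cos_neg, Complex.sin_neg]
  ring


end AuxProofs

open MeasureTheory Real in
/-- For real noninteger `ν > 0`:
`𝐉_ν(z) = 𝐣₀(ν) 𝒮_{0,ν}(z) + 𝐣₋₁(ν) 𝒮_{-1,ν}(z) + J_ν(z)` on the cut plane, for each choice
`𝒮 ∈ {S, S^(0), S^(1), S^(2)}`. -/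
theorem angerJ_eq_lommel (ν : ℝ) (hν : 0 < ν) (hint : ∀ n : ℤ, ν ≠ (n : ℝ)) :
    ∀ z ∈ Complex.slitPlane,
      (angerJ (ν : ℂ) z = angerj0 ν * lommelS 0 (ν : ℂ) z
        + angerjm1 ν * lommelS (-1) (ν : ℂ) z + besselJ (ν : ℂ) z) ∧
      (angerJ (ν : ℂ) z = angerj0 ν * lommelS0 0 (ν : ℂ) z
        + angerjm1 ν * lommelS0 (-1) (ν : ℂ) z + besselJ (ν : ℂ) z) ∧
      (angerJ (ν : ℂ) z = angerj0 ν * lommelS1 0 (ν : ℂ) z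
        + angerjm1 ν * lommelS1 (-1) (ν : ℂ) z + besselJ (ν : ℂ) z) ∧
      (angerJ (ν : ℂ) z = angerj0 ν * lommelS2 0 (ν : ℂ) z
        + angerjm1 ν * lommelS2 (-1) (ν : ℂ) z + besselJ (ν : ℂ) z) := by
  intro z _
  have hν0 : (ν:ℂ) ≠ 0 := by exact_mod_cast ne_of_gt hν
  have hcore := anger_core ν hint z
  have h1 := L1 ν hν0 hint
  have h2 := L2 ν hν0 hint
  refine ⟨?_, ?_, ?_, ?_⟩
  · simp only [lommelS]
    linear_combination hcore - besselJ (ν:ℂ) z * h1 + besselY (ν:ℂ) z * h2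
  · simp only [lommelS0]
    linear_combination hcore - besselJ (ν:ℂ) z * h1
  · simp only [lommelS1]
    rw [show ((0:ℂ) - ν) * (Real.pi:ℂ) * Complex.I / 2
        = ((0:ℂ) - ν) * (Real.pi:ℂ) * Complex.I / 2 from rfl]
    rw [expgen (0 - (ν:ℂ)), expgen (-1 - (ν:ℂ))]
    linear_combination hcore - besselJ (ν:ℂ) z * h1 + Complex.I * besselJ (ν:ℂ) z * h2
      + (besselJ (ν:ℂ) z * (angerj0 ν * (lommelA 0 (ν:ℂ) *
          Complex.sin ((0 - (ν:ℂ)) * (Real.pi:ℂ) / 2))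
        + angerjm1 ν * (lommelA (-1) (ν:ℂ) *
          Complex.sin ((-1 - (ν:ℂ)) * (Real.pi:ℂ) / 2)))) * Complex.I_sq
  · simp only [lommelS2]
    rw [show ((ν:ℂ) - 0) * (Real.pi:ℂ) * Complex.I / 2
        = -((0:ℂ) - ν) * (Real.pi:ℂ) * Complex.I / 2 by ring,
      show ((ν:ℂ) - -1) * (Real.pi:ℂ) * Complex.I / 2
        = -((-1:ℂ) - ν) * (Real.pi:ℂ) * Complex.I / 2 by ring,
      expflip (0 - (ν:ℂ)), expflip (-1 - (ν:ℂ))]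
    linear_combination hcore - besselJ (ν:ℂ) z * h1 - Complex.I * besselJ (ν:ℂ) z * h2
      + (besselJ (ν:ℂ) z * (angerj0 ν * (lommelA 0 (ν:ℂ) *
          Complex.sin ((0 - (ν:ℂ)) * (Real.pi:ℂ) / 2))
        + angerjm1 ν * (lommelA (-1) (ν:ℂ) *
          Complex.sin ((-1 - (ν:ℂ)) * (Real.pi:ℂ) / 2)))) * Complex.I_sq
end
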